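/- arXiv:2305.07739 — 8 statements merged into one kernel-verified Lean document; each statement's English description precedes it below -/
import Mathlib

section
/- Let B be a braided category. The assignments E ↦ ς^E, where ς^E_X := ρ_X ∘ E_{X,𝟙} ∘ ρ_X⁻¹ (the component of E at the monoidal unit, transported along the right unitor ρ_X : X⊗𝟙 ≅ X), and ς ↦ E^ς, where E^ς_{X,M} := (τ_{M,X} ∘ τ_{X,M})⁻¹ ∘ (ς_X ⊗ 𝟙_M) : X⊗M → X⊗M, are mutually inverse bijections between the set of braided module structures on B over itself and the set of anti-twists on B. -/
/-!
Write `m_{X,M} = τ_{M,X} ∘ τ_{X,M}` for the monodromy, so that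
`E^ς_{X,M} = m_{X,M}⁻¹ ∘ (ς_X ⊗ 𝟙_M)`. For every family `ς`, `E^ς` satisfies (C1): this is the
hexagon axiom. A family natural in `M` and satisfying (C1) is determined by its components at
`M = 𝟙`, which gives `E^{ς^E} = E`. Finally, two ways of writing the full twist on three strands,
`m_{Y⊗X,M} ∘ (m_{Y,X} ⊗ 𝟙_M) = (𝟙_Y ⊗ m_{X,M}) ∘ m_{Y,X⊗M}`, turn (C2) for `E^ς` into
`ς_{Y⊗X} ⊗ 𝟙_M = (m_{Y,X}⁻¹ ∘ (ς_Y ⊗ ς_X)) ⊗ 𝟙_M` for all `M`, i.e. (taking `M = 𝟙`) into the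
anti-twist law.
-/

open CategoryTheory MonoidalCategory

variable {B : Type*} [Category B] [MonoidalCategory B] [BraidedCategory B]

/-- An anti-twist on a braided category `B`: a natural automorphism `ς` of the identity
functor such that `ς_{X⊗Y} = (τ_{Y,X} ∘ τ_{X,Y})⁻¹ ∘ (ς_X ⊗ ς_Y)`. -/
def IsAntiTwist (ς : ∀ X : B, X ⟶ X) : Prop :=
  (∀ X : B, IsIso (ς X)) ∧
  (∀ {X Y : B} (f : X ⟶ Y), ς X ≫ f = f ≫ ς Y) ∧
  (∀ X Y : B, ς (X ⊗ Y) = (ς X ⊗ₘ ς Y) ≫ (β_ Y X).inv ≫ (β_ X Y).inv)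

/-- A braided module structure on `B` over itself (action `X·M := X⊗M`): a family of
isomorphisms `E_{X,M} : X⊗M → X⊗M`, natural in `X` and `M`, satisfying (C1) and (C2). -/
def IsBraidedModuleSelf (E : ∀ X M : B, X ⊗ M ⟶ X ⊗ M) : Prop :=
  (∀ X M : B, IsIso (E X M)) ∧
  (∀ {X X' M M' : B} (f : X ⟶ X') (g : M ⟶ M'),
      (f ⊗ₘ g) ≫ E X' M' = E X M ≫ (f ⊗ₘ g)) ∧
  -- (C1): `E_{Y,X⊗M} = ((τ_{Y,X})⁻¹ ⊗ 𝟙_M) ∘ (𝟙_X ⊗ E_{Y,M}) ∘ ((τ_{X,Y})⁻¹ ⊗ 𝟙_M)`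
  -- as endomorphisms of `Y⊗X⊗M` (with associators made explicit).
  (∀ X Y M : B,
      E Y (X ⊗ M) =
        (α_ Y X M).inv ≫ ((β_ X Y).inv ▷ M) ≫ (α_ X Y M).hom ≫
          (X ◁ E Y M) ≫ (α_ X Y M).inv ≫ ((β_ Y X).inv ▷ M) ≫ (α_ Y X M).hom) ∧
  -- (C2): `E_{Y⊗X,M} = E_{Y,X⊗M} ∘ (𝟙_Y ⊗ E_{X,M})`
  (∀ X Y M : B,
      E (Y ⊗ X) M =
        (α_ Y X M).hom ≫ (Y ◁ E X M) ≫ E Y (X ⊗ M) ≫ (α_ Y X M).inv)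

/-- The assignment `E ↦ ς^E`, where `ς^E_X := ρ_X ∘ E_{X,𝟙} ∘ ρ_X⁻¹`. -/
def antiTwistOfBraidedModuleSelf (E : ∀ X M : B, X ⊗ M ⟶ X ⊗ M) : ∀ X : B, X ⟶ X :=
  fun X => (ρ_ X).inv ≫ E X (𝟙_ B) ≫ (ρ_ X).hom

/-- The assignment `ς ↦ E^ς`, where `E^ς_{X,M} := (τ_{M,X} ∘ τ_{X,M})⁻¹ ∘ (ς_X ⊗ 𝟙_M)`. -/
def braidedModuleSelfOfAntiTwist (ς : ∀ X : B, X ⟶ X) : ∀ X M : B, X ⊗ M ⟶ X ⊗ M :=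
  fun X M => (ς X ▷ M) ≫ (β_ M X).inv ≫ (β_ X M).inv

namespace CategoryTheory.BraidedCategory

def monodromy (X Y : B) : X ⊗ Y ≅ X ⊗ Y := β_ X Y ≪≫ β_ Y X

lemma monodromy_tensorUnit_right (X : B) : monodromy X (𝟙_ B) = Iso.refl _ := by
  ext; simp [monodromy, braiding_tensorUnit_right, braiding_tensorUnit_left]

lemma monodromy_tensor_right_inv (X Y M : B) :
    (monodromy Y (X ⊗ M)).inv = (α_ Y X M).inv ≫ (β_ X Y).inv ▷ M ≫ (α_ X Y M).hom ≫
      X ◁ (monodromy Y M).inv ≫ (α_ X Y M).inv ≫ (β_ Y X).inv ▷ M ≫ (α_ Y X M).hom := by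
  simp [monodromy]

lemma monodromy_tensor_left_hom (X Y M : B) :
    (monodromy (Y ⊗ X) M).hom ≫ (monodromy Y X).hom ▷ M =
      (α_ Y X M).hom ≫ (monodromy Y (X ⊗ M)).hom ≫ Y ◁ (monodromy X M).hom ≫
        (α_ Y X M).inv := by
  -- Slide `τ_{Y,X}` through both braidings with `M`; what is left is two hexagons.
  simp only [monodromy, Iso.trans_hom, comp_whiskerRight, whiskerLeft_comp, Category.assoc]
  calc (β_ (Y ⊗ X) M).hom ≫ (β_ M (Y ⊗ X)).hom ≫ (β_ Y X).hom ▷ M ≫ (β_ X Y).hom ▷ M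
      = (β_ Y X).hom ▷ M ≫ (β_ (X ⊗ Y) M).hom ≫ (β_ M (X ⊗ Y)).hom ≫ (β_ X Y).hom ▷ M := by
        rw [← braiding_naturality_right_assoc, ← braiding_naturality_left_assoc]
    _ = (α_ Y X M).hom ≫ (β_ Y (X ⊗ M)).hom ≫ (β_ X M).hom ▷ Y ≫ (β_ M X).hom ▷ Y ≫
          (β_ (X ⊗ M) Y).hom ≫ (α_ Y X M).inv := by
        simp
    _ = _ := by rw [braiding_naturality_left_assoc, braiding_naturality_left_assoc]

lemma monodromy_tensor_left_inv (X Y M : B) :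
    (monodromy Y X).inv ▷ M ≫ (monodromy (Y ⊗ X) M).inv =
      (α_ Y X M).hom ≫ Y ◁ (monodromy X M).inv ≫ (monodromy Y (X ⊗ M)).inv ≫
        (α_ Y X M).inv :=
  eq_of_inv_eq_inv (by simp [monodromy_tensor_left_hom])

end CategoryTheory.BraidedCategory

open BraidedCategory

section

variable (ς : ∀ X : B, X ⟶ X)

lemma braidedModuleSelfOfAntiTwist_eq (X M : B) :
    braidedModuleSelfOfAntiTwist ς X M = ς X ▷ M ≫ (monodromy X M).inv := rfl

lemma braidedModuleSelfOfAntiTwist_tensorUnit (X : B) :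
    braidedModuleSelfOfAntiTwist ς X (𝟙_ B) = ς X ▷ 𝟙_ B := by
  simp [braidedModuleSelfOfAntiTwist_eq, monodromy_tensorUnit_right]

lemma antiTwistOfBraidedModuleSelf_braidedModuleSelfOfAntiTwist :
    antiTwistOfBraidedModuleSelf (braidedModuleSelfOfAntiTwist ς) = ς := by
  funext X
  simp [antiTwistOfBraidedModuleSelf, braidedModuleSelfOfAntiTwist_tensorUnit]

lemma whiskerLeft_comp_braidedModuleSelfOfAntiTwist (X : B) {M M' : B} (g : M ⟶ M') :
    X ◁ g ≫ braidedModuleSelfOfAntiTwist ς X M' = braidedModuleSelfOfAntiTwist ς X M ≫ X ◁ g := by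
  rw [braidedModuleSelfOfAntiTwist_eq, braidedModuleSelfOfAntiTwist_eq, whisker_exchange_assoc]
  simp [monodromy]

lemma braidedModuleSelfOfAntiTwist_tensor_right (X Y M : B) :
    braidedModuleSelfOfAntiTwist ς Y (X ⊗ M) =
      (α_ Y X M).inv ≫ ((β_ X Y).inv ▷ M) ≫ (α_ X Y M).hom ≫
        (X ◁ braidedModuleSelfOfAntiTwist ς Y M) ≫ (α_ X Y M).inv ≫ ((β_ Y X).inv ▷ M) ≫
          (α_ Y X M).hom := by
  simp only [braidedModuleSelfOfAntiTwist_eq, monodromy_tensor_right_inv, whiskerLeft_comp,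
    Category.assoc]
  rw [← associator_naturality_middle_assoc, ← comp_whiskerRight_assoc,
    ← braiding_inv_naturality_left, comp_whiskerRight_assoc, associator_inv_naturality_left_assoc]

lemma braidedModuleSelfOfAntiTwist_tensor_left (X Y M : B) :
    (α_ Y X M).hom ≫ Y ◁ braidedModuleSelfOfAntiTwist ς X M ≫
        braidedModuleSelfOfAntiTwist ς Y (X ⊗ M) ≫ (α_ Y X M).inv =
      ((ς Y ⊗ₘ ς X) ≫ (monodromy Y X).inv) ▷ M ≫ (monodromy (Y ⊗ X) M).inv := by
  rw [comp_whiskerRight, Category.assoc, monodromy_tensor_left_inv, MonoidalCategory.tensorHom_def,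
    comp_whiskerRight]
  simp only [braidedModuleSelfOfAntiTwist_eq, whiskerLeft_comp, Category.assoc]
  rw [whisker_exchange_assoc, whisker_exchange_assoc, ← associator_naturality_left_assoc,
    ← associator_naturality_middle_assoc]

lemma braidedModuleSelfOfAntiTwist_tensor_left_iff (X Y : B) :
    (∀ M : B, braidedModuleSelfOfAntiTwist ς (Y ⊗ X) M =
        (α_ Y X M).hom ≫ (Y ◁ braidedModuleSelfOfAntiTwist ς X M) ≫
          braidedModuleSelfOfAntiTwist ς Y (X ⊗ M) ≫ (α_ Y X M).inv) ↔
      ς (Y ⊗ X) = (ς Y ⊗ₘ ς X) ≫ (β_ X Y).inv ≫ (β_ Y X).inv := by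
  simp_rw [braidedModuleSelfOfAntiTwist_tensor_left, braidedModuleSelfOfAntiTwist_eq, cancel_mono]
  constructor
  · intro h
    have := h (𝟙_ B)
    rwa [whiskerRight_id, whiskerRight_id, cancel_epi, cancel_mono] at this
  · intro h M
    rw [h]
    rfl

lemma whiskerRight_comp_braidedModuleSelfOfAntiTwist
    (hς : ∀ {X Y : B} (f : X ⟶ Y), ς X ≫ f = f ≫ ς Y) {X X' : B} (f : X ⟶ X') (M : B) :
    f ▷ M ≫ braidedModuleSelfOfAntiTwist ς X' M = braidedModuleSelfOfAntiTwist ς X M ≫ f ▷ M := by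
  rw [braidedModuleSelfOfAntiTwist_eq, braidedModuleSelfOfAntiTwist_eq, ← comp_whiskerRight_assoc,
    ← hς, comp_whiskerRight_assoc]
  simp [monodromy]

end

theorem IsAntiTwist.isBraidedModuleSelf {ς : ∀ X : B, X ⟶ X} (hς : IsAntiTwist ς) :
    IsBraidedModuleSelf (braidedModuleSelfOfAntiTwist ς) := by
  obtain ⟨hiso, hnat, hmul⟩ := hς
  refine ⟨fun X M => ?_, fun f g => ?_, braidedModuleSelfOfAntiTwist_tensor_right ς,
    fun X Y => (braidedModuleSelfOfAntiTwist_tensor_left_iff ς X Y).mpr (hmul Y X)⟩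
  · have := hiso X
    rw [braidedModuleSelfOfAntiTwist_eq]
    infer_instance
  · rw [MonoidalCategory.tensorHom_def, Category.assoc,
      whiskerLeft_comp_braidedModuleSelfOfAntiTwist,
      reassoc_of% whiskerRight_comp_braidedModuleSelfOfAntiTwist ς hnat]

namespace IsBraidedModuleSelf

variable {E : ∀ X M : B, X ⊗ M ⟶ X ⊗ M} (hE : IsBraidedModuleSelf E)
include hE

lemma whiskerLeft_comp (X : B) {M M' : B} (g : M ⟶ M') : X ◁ g ≫ E X M' = E X M ≫ X ◁ g := by
  simpa using hE.2.1 (𝟙 X) g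

lemma whiskerRight_comp {X X' : B} (f : X ⟶ X') (M : B) : f ▷ M ≫ E X' M = E X M ≫ f ▷ M := by
  simpa using hE.2.1 f (𝟙 M)

end IsBraidedModuleSelf

lemma braidedModuleSelfOfAntiTwist_antiTwistOfBraidedModuleSelf {E : ∀ X M : B, X ⊗ M ⟶ X ⊗ M}
    (hM : ∀ (X : B) {M M' : B} (g : M ⟶ M'), X ◁ g ≫ E X M' = E X M ≫ X ◁ g)
    (hC1 : ∀ X Y M : B,
      E Y (X ⊗ M) =
        (α_ Y X M).inv ≫ ((β_ X Y).inv ▷ M) ≫ (α_ X Y M).hom ≫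
          (X ◁ E Y M) ≫ (α_ X Y M).inv ≫ ((β_ Y X).inv ▷ M) ≫ (α_ Y X M).hom) :
    braidedModuleSelfOfAntiTwist (antiTwistOfBraidedModuleSelf E) = E := by
  set ς := antiTwistOfBraidedModuleSelf E
  have hunit (Y : B) : braidedModuleSelfOfAntiTwist ς Y (𝟙_ B) = E Y (𝟙_ B) := by
    simp [braidedModuleSelfOfAntiTwist_tensorUnit, ς, antiTwistOfBraidedModuleSelf]
  funext Y X
  calc braidedModuleSelfOfAntiTwist ς Y X
      = Y ◁ (ρ_ X).inv ≫ braidedModuleSelfOfAntiTwist ς Y (X ⊗ 𝟙_ B) ≫ Y ◁ (ρ_ X).hom := by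
        rw [reassoc_of% whiskerLeft_comp_braidedModuleSelfOfAntiTwist, ← whiskerLeft_comp,
          Iso.inv_hom_id, whiskerLeft_id, Category.comp_id]
    _ = Y ◁ (ρ_ X).inv ≫ E Y (X ⊗ 𝟙_ B) ≫ Y ◁ (ρ_ X).hom := by
        rw [braidedModuleSelfOfAntiTwist_tensor_right, hC1, hunit]
    _ = E Y X := by
        rw [reassoc_of% (hM Y (ρ_ X).inv), ← whiskerLeft_comp, Iso.inv_hom_id, whiskerLeft_id,
          Category.comp_id]

theorem IsBraidedModuleSelf.isAntiTwist {E : ∀ X M : B, X ⊗ M ⟶ X ⊗ M}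
    (hE : IsBraidedModuleSelf E) : IsAntiTwist (antiTwistOfBraidedModuleSelf E) := by
  set ς := antiTwistOfBraidedModuleSelf E
  have hE' : braidedModuleSelfOfAntiTwist ς = E :=
    braidedModuleSelfOfAntiTwist_antiTwistOfBraidedModuleSelf hE.whiskerLeft_comp hE.2.2.1
  refine ⟨fun X => ?_, fun f => ?_, fun X Y => ?_⟩
  · have := hE.1 X (𝟙_ B)
    dsimp [ς, antiTwistOfBraidedModuleSelf]
    infer_instance
  · simp only [ς, antiTwistOfBraidedModuleSelf, Category.assoc]
    rw [← rightUnitor_naturality, ← reassoc_of% hE.whiskerRight_comp,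
      rightUnitor_inv_naturality_assoc]
  · rw [← braidedModuleSelfOfAntiTwist_tensor_left_iff, hE']
    exact hE.2.2.2 Y X

/-- The assignments `E ↦ ς^E` and `ς ↦ E^ς` are mutually inverse bijections between the
set of braided module structures on `B` over itself and the set of anti-twists on `B`. -/
theorem braided_module_self_antitwist_bijection :
    (∀ E : ∀ X M : B, X ⊗ M ⟶ X ⊗ M, IsBraidedModuleSelf E →
      IsAntiTwist (antiTwistOfBraidedModuleSelf E)) ∧
    (∀ ς : ∀ X : B, X ⟶ X, IsAntiTwist ς →
      IsBraidedModuleSelf (braidedModuleSelfOfAntiTwist ς)) ∧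
    (∀ E : ∀ X M : B, X ⊗ M ⟶ X ⊗ M, IsBraidedModuleSelf E →
      braidedModuleSelfOfAntiTwist (antiTwistOfBraidedModuleSelf E) = E) ∧
    (∀ ς : ∀ X : B, X ⟶ X, IsAntiTwist ς →
      antiTwistOfBraidedModuleSelf (braidedModuleSelfOfAntiTwist ς) = ς) :=
  ⟨fun _ hE => hE.isAntiTwist, fun _ hς => hς.isBraidedModuleSelf,
    fun _ hE =>
      braidedModuleSelfOfAntiTwist_antiTwistOfBraidedModuleSelf hE.whiskerLeft_comp hE.2.2.1,
    fun ς _ => antiTwistOfBraidedModuleSelf_braidedModuleSelfOfAntiTwist ς⟩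
end

section
/- Let B be a braided category and let E be a braided module structure on B over itself. Then E is automatically stable in a canonical way: setting ς_X := ρ_X ∘ E_{X,𝟙} ∘ ρ_X⁻¹ (the component of E at the monoidal unit, transported along the right unitor), ς is a natural automorphism of the identity functor of B and E_{X,M} = ς_{X⊗M} ∘ (𝟙_X ⊗ ς_M)⁻¹ for all objects X, M (suppressing associators). -/
open CategoryTheory MonoidalCategory

variable {B : Type*} [Category B] [MonoidalCategory B] [BraidedCategory B]

/-! The case `M = 𝟙` of (C2) writes `E_{X⊗M,𝟙}` as `E_{X,M⊗𝟙} ∘ (𝟙_X ⊗ E_{M,𝟙})`, and naturality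
of `E` in its second argument along `ρ_M` turns `E_{X,M⊗𝟙}` into `E_{X,M}`; after transport along
the unitors this is `ς_{X⊗M} = E_{X,M} ∘ (𝟙_X ⊗ ς_M)`. -/

section

variable {C : Type*} [Category C] [MonoidalCategory C] {E : ∀ X M : C, X ⊗ M ⟶ X ⊗ M}

instance antiTwistOfBraidedModuleSelf_isIso (X : C) [IsIso (E X (𝟙_ C))] :
    IsIso (antiTwistOfBraidedModuleSelf E X) := by
  unfold antiTwistOfBraidedModuleSelf
  infer_instance

theorem antiTwistOfBraidedModuleSelf_naturality
    (hnat : ∀ {X Y : C} (f : X ⟶ Y), (f ▷ 𝟙_ C) ≫ E Y (𝟙_ C) = E X (𝟙_ C) ≫ (f ▷ 𝟙_ C))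
    {X Y : C} (f : X ⟶ Y) :
    antiTwistOfBraidedModuleSelf E X ≫ f = f ≫ antiTwistOfBraidedModuleSelf E Y := by
  simp only [antiTwistOfBraidedModuleSelf, Category.assoc, ← rightUnitor_naturality,
    reassoc_of% hnat f, rightUnitor_inv_naturality_assoc]

theorem whiskerLeft_antiTwistOfBraidedModuleSelf_comp
    (hnat : ∀ (X : C) {M M' : C} (g : M ⟶ M'), (X ◁ g) ≫ E X M' = E X M ≫ (X ◁ g))
    (hC2 : ∀ X Y M : C,
      E (Y ⊗ X) M = (α_ Y X M).hom ≫ (Y ◁ E X M) ≫ E Y (X ⊗ M) ≫ (α_ Y X M).inv)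
    (X M : C) :
    (X ◁ antiTwistOfBraidedModuleSelf E M) ≫ E X M = antiTwistOfBraidedModuleSelf E (X ⊗ M) := by
  have hρ : E X (M ⊗ 𝟙_ C) = (X ◁ (ρ_ M).hom) ≫ E X M ≫ (X ◁ (ρ_ M).inv) := by
    rw [reassoc_of% hnat X (ρ_ M).hom, whiskerLeft_hom_inv, Category.comp_id]
  simp only [antiTwistOfBraidedModuleSelf, hC2 M X (𝟙_ C), hρ]
  monoidal

end

/-- A braided module structure `E` on `B` over itself is automatically stable in a
canonical way: `ς_X := ρ_X ∘ E_{X,𝟙} ∘ ρ_X⁻¹` is a natural automorphism of the identity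
functor and `E_{X,M} = ς_{X⊗M} ∘ (𝟙_X ⊗ ς_M)⁻¹` (equivalently,
`E_{X,M} ∘ (𝟙_X ⊗ ς_M) = ς_{X⊗M}`) for all `X, M`. -/
theorem braidedModuleSelf_stable (E : ∀ X M : B, X ⊗ M ⟶ X ⊗ M)
    (hE : IsBraidedModuleSelf E) :
    (∀ X : B, IsIso (antiTwistOfBraidedModuleSelf E X)) ∧
    (∀ {X Y : B} (f : X ⟶ Y),
      antiTwistOfBraidedModuleSelf E X ≫ f = f ≫ antiTwistOfBraidedModuleSelf E Y) ∧
    (∀ X M : B,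
      (X ◁ antiTwistOfBraidedModuleSelf E M) ≫ E X M
        = antiTwistOfBraidedModuleSelf E (X ⊗ M)) := by
  obtain ⟨hiso, hnat, -, hC2⟩ := hE
  refine ⟨fun X => ?_, ?_, ?_⟩
  · have := hiso X (𝟙_ B)
    infer_instance
  · exact antiTwistOfBraidedModuleSelf_naturality fun f => by
      simpa only [tensorHom_id] using hnat f (𝟙 _)
  · exact whiskerLeft_antiTwistOfBraidedModuleSelf_comp
      (fun X _ _ g => by simpa only [id_tensorHom] using hnat (𝟙 X) g) hC2
end

section
/- Let B be a braided category and let y be an invertible object of B (i.e. there is an object y' and isomorphisms y⊗y' ≅ 𝟙 and y'⊗y ≅ 𝟙). For each object X there is a unique morphism φ^y_X : X → X such that φ^y_X ⊗ 𝟙_y = τ_{y,X} ∘ τ_{X,y} : X⊗y → X⊗y (the double braiding of X with y); moreover (i) φ^y is a natural automorphism of the identity functor of B, (ii) φ^y is monoidal, i.e. φ^y_{X⊗Z} = φ^y_X ⊗ φ^y_Z for all X, Z and φ^y_𝟙 = 𝟙, and (iii) for invertible objects y and z one has φ^{y⊗z}_X = φ^y_X ∘ φ^z_X for all X, and φ^y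 = φ^{y₁} whenever y ≅ y₁. -/
/-!
Since `y` has an inverse `y'`, the functor `- ⊗ y` is fully faithful: composed with `- ⊗ y'` it
is isomorphic to the identity. Hence the double braiding `X ⊗ y ⟶ X ⊗ y` is `φ ▷ y` for a
unique `φ`, and every claimed property of `φ` may be checked after whiskering by `y`, where it
becomes a property of the double braiding: its naturality in both variables, and the hexagon
identities, which express the double braiding of `X ⊗ Z` with `y` (resp. of `X` with `y ⊗ z`)
through those of the factors.
-/

open CategoryTheory MonoidalCategory

variable {B : Type*} [Category B] [MonoidalCategory B] [BraidedCategory B]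

namespace CategoryTheory.MonoidalCategory

variable {C : Type*} [Category C] [MonoidalCategory C] {y w : C}

def tensorRightCompTensorRightIso (ε : y ⊗ w ≅ 𝟙_ C) : tensorRight y ⋙ tensorRight w ≅ 𝟭 C :=
  (tensorRightTensor y w).symm ≪≫ (tensoringRight C).mapIso ε ≪≫ rightUnitorNatIso C

lemma tensorRight_faithful (ε : y ⊗ w ≅ 𝟙_ C) : (tensorRight y).Faithful :=
  Functor.Faithful.of_comp_iso (tensorRightCompTensorRightIso ε)

lemma tensorRight_full (ε : y ⊗ w ≅ 𝟙_ C) (ε' : w ⊗ y ≅ 𝟙_ C) : (tensorRight y).Full :=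
  have := tensorRight_faithful ε'
  Functor.Full.of_comp_faithful_iso (tensorRightCompTensorRightIso ε)

lemma whiskerRight_injective (ε : y ⊗ w ≅ 𝟙_ C) {X Z : C} :
    Function.Injective (fun f : X ⟶ Z => f ▷ y) :=
  (tensorRight_faithful ε).map_injective

lemma whiskerRight_surjective (ε : y ⊗ w ≅ 𝟙_ C) (ε' : w ⊗ y ≅ 𝟙_ C) {X Z : C} :
    Function.Surjective (fun f : X ⟶ Z => f ▷ y) :=
  (tensorRight_full ε ε').map_surjective

lemma isIso_of_isIso_whiskerRight (ε : y ⊗ w ≅ 𝟙_ C) (ε' : w ⊗ y ≅ 𝟙_ C) {X Z : C}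
    (f : X ⟶ Z) [IsIso (f ▷ y)] : IsIso f :=
  have := tensorRight_faithful ε
  have := tensorRight_full ε ε'
  have : IsIso ((tensorRight y).map f) := ‹IsIso (f ▷ y)›
  isIso_of_reflects_iso f (tensorRight y)

def tensorTensorIsoUnit {y' z z' : C} (e : y ⊗ y' ≅ 𝟙_ C) (ez : z ⊗ z' ≅ 𝟙_ C) :
    (y ⊗ z) ⊗ (z' ⊗ y') ≅ 𝟙_ C :=
  α_ y z (z' ⊗ y') ≪≫ whiskerLeftIso y ((α_ z z' y').symm ≪≫ whiskerRightIso ez y' ≪≫ λ_ y') ≪≫ e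

end CategoryTheory.MonoidalCategory

namespace CategoryTheory.BraidedCategory

variable {C : Type*} [Category C] [MonoidalCategory C] [BraidedCategory C]

def doubleBraiding (X y : C) : X ⊗ y ⟶ X ⊗ y := (β_ X y).hom ≫ (β_ y X).hom

lemma doubleBraiding_naturality_left {X Z : C} (f : X ⟶ Z) (y : C) :
    f ▷ y ≫ doubleBraiding Z y = doubleBraiding X y ≫ f ▷ y := by
  simp [doubleBraiding]

lemma doubleBraiding_naturality_right (X : C) {y y₁ : C} (g : y ⟶ y₁) :
    X ◁ g ≫ doubleBraiding X y₁ = doubleBraiding X y ≫ X ◁ g := by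
  simp [doubleBraiding]

lemma doubleBraiding_tensorUnit_left (y : C) : doubleBraiding (𝟙_ C) y = 𝟙 _ := by
  simp [doubleBraiding]

lemma doubleBraiding_tensor_left (X Z y : C) :
    doubleBraiding (X ⊗ Z) y = (α_ X Z y).hom ≫ X ◁ (β_ Z y).hom ≫ (α_ X y Z).inv ≫
      doubleBraiding X y ▷ Z ≫ (α_ X y Z).hom ≫ X ◁ (β_ y Z).hom ≫ (α_ X Z y).inv := by
  simp [doubleBraiding]

lemma doubleBraiding_tensor_right (X y z : C) :
    doubleBraiding X (y ⊗ z) = (α_ X y z).inv ≫ (β_ X y).hom ▷ z ≫ (α_ y X z).hom ≫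
      y ◁ doubleBraiding X z ≫ (α_ y X z).inv ≫ (β_ y X).hom ▷ z ≫ (α_ X y z).hom := by
  simp [doubleBraiding]

lemma tensorHom_whiskerRight_eq_doubleBraiding {X Z y : C} {φX : X ⟶ X} {φZ : Z ⟶ Z}
    (hX : φX ▷ y = doubleBraiding X y) (hZ : φZ ▷ y = doubleBraiding Z y) :
    (φX ⊗ₘ φZ) ▷ y = doubleBraiding (X ⊗ Z) y := by
  rw [doubleBraiding_tensor_left, ← hX, MonoidalCategory.tensorHom_def, comp_whiskerRight,
    whisker_assoc, hZ, doubleBraiding]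
  simp only [whiskerRight_tensor_symm, Category.assoc, Iso.inv_hom_id_assoc,
    whisker_exchange_assoc, whiskerLeft_comp]

lemma comp_whiskerRight_tensor_eq_doubleBraiding {X y z : C} {φy φz : X ⟶ X}
    (hy : φy ▷ y = doubleBraiding X y) (hz : φz ▷ z = doubleBraiding X z) :
    (φz ≫ φy) ▷ (y ⊗ z) = doubleBraiding X (y ⊗ z) := by
  rw [doubleBraiding_tensor_right, ← hz, whisker_assoc_symm, whiskerRight_tensor,
    comp_whiskerRight, hy, doubleBraiding]
  simp only [Category.assoc, Iso.hom_inv_id_assoc, ← comp_whiskerRight_assoc,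
    braiding_naturality_left_assoc]

lemma whiskerRight_eq_doubleBraiding_of_iso {X y y₁ : C} (i : y ≅ y₁) {φ : X ⟶ X}
    (h : φ ▷ y₁ = doubleBraiding X y₁) : φ ▷ y = doubleBraiding X y := by
  rw [← cancel_mono (X ◁ i.hom), ← doubleBraiding_naturality_right, ← h, whisker_exchange]

end CategoryTheory.BraidedCategory

/-- For an invertible object `y` of a braided category `B`:
(existence and uniqueness) for each `X` there is a unique `φ : X ⟶ X` with
`φ ▷ y` equal to the double braiding of `X` with `y`; moreover any family `φ` with this
defining property (i) is a natural automorphism of the identity functor, (ii) is monoidal,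
and (iii) is multiplicative in `y` and depends on `y` only up to isomorphism. -/
theorem doubleBraiding_invertible_object (y y' : B)
    (e : y ⊗ y' ≅ 𝟙_ B) (e' : y' ⊗ y ≅ 𝟙_ B) :
    -- unique existence of `φ^y_X`
    (∀ X : B, ∃! φ : X ⟶ X, φ ▷ y = (β_ X y).hom ≫ (β_ y X).hom) ∧
    -- (i) and (ii): any family with the defining property is a monoidal natural
    -- automorphism of the identity functor
    (∀ φ : ∀ X : B, X ⟶ X, (∀ X : B, φ X ▷ y = (β_ X y).hom ≫ (β_ y X).hom) →
      ((∀ X : B, IsIso (φ X)) ∧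
       (∀ {X Z : B} (f : X ⟶ Z), φ X ≫ f = f ≫ φ Z) ∧
       (∀ X Z : B, φ (X ⊗ Z) = φ X ⊗ₘ φ Z) ∧
       (φ (𝟙_ B) = 𝟙 (𝟙_ B)))) ∧
    -- (iii) first part: `φ^{y⊗z} = φ^y ∘ φ^z` for invertible `z`
    (∀ (z z' : B), (z ⊗ z' ≅ 𝟙_ B) → (z' ⊗ z ≅ 𝟙_ B) →
      ∀ (φy φz φyz : ∀ X : B, X ⟶ X),
        (∀ X : B, φy X ▷ y = (β_ X y).hom ≫ (β_ y X).hom) →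
        (∀ X : B, φz X ▷ z = (β_ X z).hom ≫ (β_ z X).hom) →
        (∀ X : B, φyz X ▷ (y ⊗ z) = (β_ X (y ⊗ z)).hom ≫ (β_ (y ⊗ z) X).hom) →
        ∀ X : B, φyz X = φz X ≫ φy X) ∧
    -- (iii) second part: `φ^y = φ^{y₁}` whenever `y ≅ y₁`
    (∀ (y₁ : B), (y ≅ y₁) → ∀ (φ φ₁ : ∀ X : B, X ⟶ X),
        (∀ X : B, φ X ▷ y = (β_ X y).hom ≫ (β_ y X).hom) →
        (∀ X : B, φ₁ X ▷ y₁ = (β_ X y₁).hom ≫ (β_ y₁ X).hom) →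
        ∀ X : B, φ X = φ₁ X) := by
  refine ⟨fun X => ?_, fun φ hφ => ⟨fun X => ?_, fun f => ?_, fun X Z => ?_, ?_⟩, ?_, ?_⟩
  · obtain ⟨φ, hφ⟩ := whiskerRight_surjective e e' (BraidedCategory.doubleBraiding X y)
    exact ⟨φ, hφ, fun ψ hψ => whiskerRight_injective e (hψ.trans hφ.symm)⟩
  · have : IsIso (φ X ▷ y) := by rw [hφ X]; infer_instance
    exact isIso_of_isIso_whiskerRight e e' (φ X)
  · refine whiskerRight_injective e ?_
    simp only [comp_whiskerRight, hφ]
    exact (BraidedCategory.doubleBraiding_naturality_left f y).symm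
  · exact whiskerRight_injective e <| (hφ (X ⊗ Z)).trans
      (BraidedCategory.tensorHom_whiskerRight_eq_doubleBraiding (hφ X) (hφ Z)).symm
  · exact whiskerRight_injective e <| (hφ (𝟙_ B)).trans <|
      (BraidedCategory.doubleBraiding_tensorUnit_left y).trans (id_whiskerRight _ _).symm
  · intro z z' ez _ φy φz φyz hy hz hyz X
    exact whiskerRight_injective (tensorTensorIsoUnit e ez) <| (hyz X).trans
      (BraidedCategory.comp_whiskerRight_tensor_eq_doubleBraiding (hy X) (hz X)).symm
  · intro y₁ i φ φ₁ hφ hφ₁ X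
    exact whiskerRight_injective e <| (hφ X).trans
      (BraidedCategory.whiskerRight_eq_doubleBraiding_of_iso i (hφ₁ X)).symm
end

section
/- Let B be a braided category, let ς and ς' be anti-twists on B, and let y be an invertible object of B. Write E^ς_{X,M} := (τ_{M,X} ∘ τ_{X,M})⁻¹ ∘ (ς_X ⊗ 𝟙_M) and similarly E^{ς'}. Then the functor −⊗y intertwines the braided module structures, i.e. α_{X,M,y} ∘ (E^ς_{X,M} ⊗ 𝟙_y) ∘ α⁻¹_{X,M,y} = E^{ς'}_{X,M⊗y} for all X, M (α the associator), if and only if ς'_X = φ^y_X ∘ ς_X for all X. Moreover, assuming ς' = φ^y ∘ ς, one has ς'_{M⊗y} = ς_M ⊗ 𝟙_y for all M (i.e. −⊗y is stable) if and only if ς'_y = 𝟙_y. -/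
/-!
The double braiding of `X` with `M ⊗ y` is the double braiding of `X` with `M`, whiskered by `y`,
followed by `φ^y_X`. Hence conjugating `E^ς_{X,M} ⊗ 𝟙_y` by the associator gives
`E^{φ^y ∘ ς}_{X,M⊗y}`, and `−⊗y` intertwines `E^ς` with `E^{ς'}` iff `ς'_X ⊗ 𝟙_{M⊗y}` and
`φ^y_X ∘ ς_X ⊗ 𝟙_{M⊗y}` agree for all `M`; taking `M = 𝟙`, whiskering by the invertible object
`𝟙 ⊗ y` is faithful. For stability, `ς'_{M⊗y} = (double braiding)⁻¹ ∘ (ς'_M ⊗ ς'_y)`, and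
`ς'_M = φ^y_M ∘ ς_M` absorbs the double braiding of `M` with `y`; conversely put `M = 𝟙`, on
which every anti-twist is trivial.
-/

open CategoryTheory MonoidalCategory

variable {B : Type*} [Category B] [MonoidalCategory B] [BraidedCategory B]

theorem eq_of_whiskerRight_eq_of_iso_unit {C : Type*} [Category C] [MonoidalCategory C]
    {y y' : C} (e : y ⊗ y' ≅ 𝟙_ C) {X X' : C} {f g : X ⟶ X'} (h : f ▷ y = g ▷ y) : f = g := by
  have recover : ∀ k : X ⟶ X', k = (ρ_ X).inv ≫ X ◁ e.inv ≫ (α_ X y y').inv ≫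
      (k ▷ y) ▷ y' ≫ (α_ X' y y').hom ≫ X' ◁ e.hom ≫ (ρ_ X').hom := by
    intro k
    rw [associator_naturality_left_assoc, Iso.inv_hom_id_assoc, whisker_exchange_assoc]
    simp
  rw [recover f, recover g, h]

namespace IsAntiTwist

theorem app_unit {ς : ∀ X : B, X ⟶ X} (hς : IsAntiTwist ς) : ς (𝟙_ B) = 𝟙 _ := by
  obtain ⟨hiso, hnat, hmul⟩ := hς
  -- Naturality along `λ_𝟙`, with `β_{𝟙,𝟙}` trivial: `ς_𝟙` is an idempotent isomorphism.
  have hsq : ς (𝟙_ B) ≫ ς (𝟙_ B) = ς (𝟙_ B) := by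
    have h := hnat (λ_ (𝟙_ B)).hom
    rw [hmul] at h
    simpa [MonoidalCategory.tensorHom_def, ← unitors_equal, ← unitors_inv_equal] using h
  have := hiso (𝟙_ B)
  rw [← cancel_epi (ς (𝟙_ B)), hsq, Category.comp_id]

end IsAntiTwist

theorem braidedModuleSelfOfAntiTwist_eq_iff {ς ς' : ∀ X : B, X ⟶ X} {X M : B} :
    braidedModuleSelfOfAntiTwist ς X M = braidedModuleSelfOfAntiTwist ς' X M ↔
      ς X ▷ M = ς' X ▷ M := by
  simp only [braidedModuleSelfOfAntiTwist, cancel_mono]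

theorem braiding_tensor_right_hom_comp_braiding_hom (y : B) (φ : ∀ X : B, X ⟶ X)
    (hφ : ∀ X : B, φ X ▷ y = (β_ X y).hom ≫ (β_ y X).hom) (X M : B) :
    (β_ X (M ⊗ y)).hom ≫ (β_ (M ⊗ y) X).hom
      = φ X ▷ (M ⊗ y) ≫ (α_ X M y).inv ≫
        ((β_ X M).hom ≫ (β_ M X).hom) ▷ y ≫ (α_ X M y).hom := by
  calc (β_ X (M ⊗ y)).hom ≫ (β_ (M ⊗ y) X).hom
      = (α_ X M y).inv ≫ ((β_ X M).hom ≫ M ◁ φ X ≫ (β_ M X).hom) ▷ y ≫ (α_ X M y).hom := by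
        rw [BraidedCategory.braiding_tensor_right_hom, BraidedCategory.braiding_tensor_left_hom]
        simp only [Category.assoc, Iso.inv_hom_id_assoc, ← whiskerLeft_comp_assoc, ← hφ X]
        simp only [comp_whiskerRight, whisker_assoc, Category.assoc]
    _ = (α_ X M y).inv ≫ (φ X ▷ M ≫ (β_ X M).hom ≫ (β_ M X).hom) ▷ y ≫ (α_ X M y).hom := by
        rw [← BraidedCategory.braiding_naturality_left_assoc]
    _ = _ := by
        simp only [comp_whiskerRight, Category.assoc]
        rw [associator_inv_naturality_left_assoc]

theorem braidedModuleSelfOfAntiTwist_whiskerRight (y : B) (φ : ∀ X : B, X ⟶ X)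
    (hφ : ∀ X : B, φ X ▷ y = (β_ X y).hom ≫ (β_ y X).hom) (ς : ∀ X : B, X ⟶ X) (X M : B) :
    (α_ X M y).inv ≫ braidedModuleSelfOfAntiTwist ς X M ▷ y ≫ (α_ X M y).hom
      = braidedModuleSelfOfAntiTwist (fun X => ς X ≫ φ X) X (M ⊗ y) := by
  have inner : ς X ▷ M ≫ (β_ M X).inv ≫ (β_ X M).inv ≫ φ X ▷ M ≫ (β_ X M).hom ≫ (β_ M X).hom
      = (ς X ≫ φ X) ▷ M := by
    rw [BraidedCategory.braiding_naturality_left_assoc, BraidedCategory.braiding_naturality_right]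
    simp
  simp only [braidedModuleSelfOfAntiTwist]
  rw [← cancel_mono (β_ X (M ⊗ y)).hom, ← cancel_mono (β_ (M ⊗ y) X).hom]
  simp only [Category.assoc, Iso.inv_hom_id, Category.comp_id]
  rw [braiding_tensor_right_hom_comp_braiding_hom y φ hφ X M,
    associator_inv_naturality_left_assoc, Iso.hom_inv_id_assoc]
  simp only [← comp_whiskerRight_assoc, Category.assoc]
  rw [inner, associator_naturality_left, Iso.inv_hom_id_assoc]

theorem tensor_by_invertible_braided_and_stable_general
    (ς ς' : ∀ X : B, X ⟶ X) (hς : IsAntiTwist ς) (hς' : IsAntiTwist ς')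
    (y y' : B) (e : y ⊗ y' ≅ 𝟙_ B)
    (φ : ∀ X : B, X ⟶ X)
    (hφ : ∀ X : B, φ X ▷ y = (β_ X y).hom ≫ (β_ y X).hom) :
    ((∀ X M : B,
        (α_ X M y).inv ≫ (braidedModuleSelfOfAntiTwist ς X M ▷ y) ≫ (α_ X M y).hom
          = braidedModuleSelfOfAntiTwist ς' X (M ⊗ y))
      ↔ (∀ X : B, ς' X = ς X ≫ φ X)) ∧
    ((∀ X : B, ς' X = ς X ≫ φ X) →
      ((∀ M : B, ς' (M ⊗ y) = ς M ▷ y) ↔ ς' y = 𝟙 y)) := by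
  refine ⟨⟨fun hE X => ?_, fun h X M => ?_⟩, fun h => ⟨fun hst => ?_, fun hy M => ?_⟩⟩
  · have hX := braidedModuleSelfOfAntiTwist_eq_iff.mp
      ((hE X (𝟙_ B)).symm.trans (braidedModuleSelfOfAntiTwist_whiskerRight y φ hφ ς X (𝟙_ B)))
    exact eq_of_whiskerRight_eq_of_iso_unit (whiskerRightIso (λ_ y) y' ≪≫ e) hX
  · rw [braidedModuleSelfOfAntiTwist_whiskerRight y φ hφ, funext h]
  · have hunit : ς' (𝟙_ B ⊗ y) = 𝟙 _ := by rw [hst, hς.app_unit, id_whiskerRight]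
    have hnat := hς'.2.1 (λ_ y).hom
    rw [hunit, Category.id_comp] at hnat
    rw [← cancel_epi (λ_ y).hom, ← hnat, Category.comp_id]
  · rw [hς'.2.2 M y, hy, tensorHom_id, h M, comp_whiskerRight, Category.assoc, hφ M]
    simp

/-- Let `ς`, `ς'` be anti-twists on `B` and `y` an invertible object with `φ^y` the
natural automorphism determined by `φ^y_X ⊗ 𝟙_y = τ_{y,X} ∘ τ_{X,y}`.  Then `−⊗y`
intertwines `E^ς` and `E^{ς'}` iff `ς' = φ^y ∘ ς`; and assuming `ς' = φ^y ∘ ς`, the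
functor `−⊗y` is stable (i.e. `ς'_{M⊗y} = ς_M ⊗ 𝟙_y` for all `M`) iff `ς'_y = 𝟙_y`. -/
theorem tensor_by_invertible_braided_and_stable
    (ς ς' : ∀ X : B, X ⟶ X) (hς : IsAntiTwist ς) (hς' : IsAntiTwist ς')
    (y y' : B) (e : y ⊗ y' ≅ 𝟙_ B) (e' : y' ⊗ y ≅ 𝟙_ B)
    (φ : ∀ X : B, X ⟶ X)
    (hφ : ∀ X : B, φ X ▷ y = (β_ X y).hom ≫ (β_ y X).hom) :
    ((∀ X M : B,
        (α_ X M y).inv ≫ (braidedModuleSelfOfAntiTwist ς X M ▷ y) ≫ (α_ X M y).hom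
          = braidedModuleSelfOfAntiTwist ς' X (M ⊗ y))
      ↔ (∀ X : B, ς' X = ς X ≫ φ X)) ∧
    ((∀ X : B, ς' X = ς X ≫ φ X) →
      ((∀ M : B, ς' (M ⊗ y) = ς M ▷ y) ↔ ς' y = 𝟙 y)) :=
  tensor_by_invertible_braided_and_stable_general ς ς' hς hς' y y' e φ hφ
end

section
/- Let B be a rigid braided category and let ς be an anti-twist on B. For each object X define ς†_X : X → X as the morphism obtained from the component ς_{X*} : X* → X* at the (right) dual of X by taking its dual (mate) morphism and transporting along the canonical isomorphism between X and the double dual ⁎(X*) (left dual of the right dual). Then ς† is again an anti-twist on B. -/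
/-! ς†_X is the mate of ς_{Xᘁ} with respect to the pairing `(X, Xᘁ)`. Taking mates reverses
composition, turns `f ⊗ g` into `ᘁg ⊗ ᘁf` for the tensor pairing `(X ⊗ Y, Yᘁ ⊗ Xᘁ)`, and sends the
inverse braiding of the duals to the inverse braiding; a morphism `f` is itself the mate of `fᘁ`.
Naturality of ς† is then the mate of naturality of ς at `fᘁ`, and the tensor rule for ς† at
`X ⊗ Y` is the mate of the tensor rule for ς at `Yᘁ ⊗ Xᘁ ≅ (X ⊗ Y)ᘁ`, using that the double
braiding is natural. -/

open CategoryTheory MonoidalCategory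

variable {B : Type*} [Category B] [MonoidalCategory B] [BraidedCategory B]

section Rigid

variable [RigidCategory B]

/-- The canonical isomorphism between `X` and the left dual `ᘁ(Xᘁ)` of its right dual,
coming from the fact that both are left duals of `Xᘁ`. -/
def doubleDualIso (X : B) : X ≅ ᘁ(Xᘁ) :=
  leftDualIso HasRightDual.exact HasLeftDual.exact

/-- `ς†_X : X ⟶ X`, obtained from the component `ς_{Xᘁ} : Xᘁ ⟶ Xᘁ` at the right dual of
`X` by taking its mate `ᘁ(ς_{Xᘁ}) : ᘁ(Xᘁ) ⟶ ᘁ(Xᘁ)` and transporting along the canonical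
isomorphism `X ≅ ᘁ(Xᘁ)`. -/
def daggerAntiTwist (ς : ∀ X : B, X ⟶ X) (X : B) : X ⟶ X :=
  (doubleDualIso X).hom ≫ (ᘁ(ς (Xᘁ))) ≫ (doubleDualIso X).inv

namespace CategoryTheory

section Mates

variable {C : Type*} [Category C] [MonoidalCategory C]

/-- Unlike `leftAdjointMate`, this does not refer to chosen duals, so that pairings such as
`(X ⊗ Y, Yᘁ ⊗ Xᘁ)` and `(X ⊗ Y, (X ⊗ Y)ᘁ)` can be used side by side. -/
def IsLeftAdjointMate {X Y X' Y' : C} [ExactPairing X Y] [ExactPairing X' Y']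
    (f : Y ⟶ Y') (c : X' ⟶ X) : Prop :=
  η_ X' Y' ≫ c ▷ Y' = η_ X Y ≫ X ◁ f

theorem isLeftAdjointMate_leftAdjointMate {Y Y' : C} [HasLeftDual Y] [HasLeftDual Y']
    (f : Y ⟶ Y') : IsLeftAdjointMate f (ᘁf) :=
  coevaluation_comp_leftAdjointMate f

theorem isLeftAdjointMate_rightAdjointMate {X X' : C} [HasRightDual X] [HasRightDual X']
    (g : X ⟶ X') : IsLeftAdjointMate (gᘁ) g :=
  (coevaluation_comp_rightAdjointMate g).symm

variable {X Y X' Y' X'' Y'' : C} [ExactPairing X Y] [ExactPairing X' Y'] [ExactPairing X'' Y'']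

theorem IsLeftAdjointMate.unique {f : Y ⟶ Y'} {c c' : X' ⟶ X} (h : IsLeftAdjointMate f c)
    (h' : IsLeftAdjointMate f c') : c = c' := by
  simpa using congrArg (tensorRightHomEquiv _ X' Y' _).symm (h.trans h'.symm)

theorem isLeftAdjointMate_id : IsLeftAdjointMate (𝟙 Y) (𝟙 X) := by
  simp [IsLeftAdjointMate]

theorem IsLeftAdjointMate.comp {f : Y ⟶ Y'} {g : Y' ⟶ Y''} {c : X' ⟶ X} {d : X'' ⟶ X'}
    (hf : IsLeftAdjointMate f c) (hg : IsLeftAdjointMate g d) :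
    IsLeftAdjointMate (f ≫ g) (d ≫ c) := by
  unfold IsLeftAdjointMate at *
  rw [comp_whiskerRight, reassoc_of% hg, whisker_exchange, reassoc_of% hf, whiskerLeft_comp]

theorem exists_isLeftAdjointMate (f : Y ⟶ Y') : ∃ c : X' ⟶ X, IsLeftAdjointMate f c :=
  ⟨@leftAdjointMate C _ _ Y Y' ⟨X⟩ ⟨X'⟩ f,
    @coevaluation_comp_leftAdjointMate C _ _ Y Y' ⟨X⟩ ⟨X'⟩ f⟩

theorem IsLeftAdjointMate.isIso {f : Y ⟶ Y'} {c : X' ⟶ X} [IsIso f]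
    (h : IsLeftAdjointMate f c) : IsIso c := by
  obtain ⟨d, h'⟩ := exists_isLeftAdjointMate (X := X') (X' := X) (inv f)
  refine ⟨d, (h'.comp h).unique ?_, (h.comp h').unique ?_⟩ <;>
    simpa using isLeftAdjointMate_id

theorem isLeftAdjointMate_rightDualIso_hom {X Z₁ Z₂ : C} (p₁ : ExactPairing X Z₁)
    (p₂ : ExactPairing X Z₂) : IsLeftAdjointMate (rightDualIso p₁ p₂).hom (𝟙 X) :=
  @isLeftAdjointMate_rightAdjointMate C _ _ X X ⟨Z₂⟩ ⟨Z₁⟩ (𝟙 X)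

theorem IsLeftAdjointMate.congr_rightDual {ς : ∀ Z : C, Z ⟶ Z}
    (hς : ∀ {Z Z' : C} (f : Z ⟶ Z'), ς Z ≫ f = f ≫ ς Z') {X Z₁ Z₂ : C} [p₁ : ExactPairing X Z₁]
    [p₂ : ExactPairing X Z₂] {c : X ⟶ X} (h : IsLeftAdjointMate (ς Z₂) c) :
    IsLeftAdjointMate (ς Z₁) c := by
  let j := rightDualIso p₁ p₂
  have hj : ς Z₁ = j.hom ≫ ς Z₂ ≫ j.inv := by
    rw [← reassoc_of% (hς j.hom), Iso.hom_inv_id, Category.comp_id]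
  have hinv : IsLeftAdjointMate j.inv (𝟙 X) := isLeftAdjointMate_rightDualIso_hom p₂ p₁
  rw [hj]
  simpa using (isLeftAdjointMate_rightDualIso_hom p₁ p₂).comp (h.comp hinv)

end Mates

section Tensor

variable {C : Type*} [Category C] [MonoidalCategory C]
  {X₁ Y₁ X₁' Y₁' X₂ Y₂ X₂' Y₂' : C} [ExactPairing X₁ Y₁] [ExactPairing X₁' Y₁']
  [ExactPairing X₂ Y₂] [ExactPairing X₂' Y₂']

theorem IsLeftAdjointMate.tensorHom {f₁ : Y₁ ⟶ Y₁'} {c₁ : X₁' ⟶ X₁} {f₂ : Y₂ ⟶ Y₂'}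
    {c₂ : X₂' ⟶ X₂} (h₁ : IsLeftAdjointMate f₁ c₁) (h₂ : IsLeftAdjointMate f₂ c₂) :
    IsLeftAdjointMate (f₂ ⊗ₘ f₁) (c₁ ⊗ₘ c₂) := by
  unfold IsLeftAdjointMate at *
  rw [ExactPairing.tensor_coevaluation, ExactPairing.tensor_coevaluation]
  calc _
      = η_ X₁' Y₁' ⊗≫ (X₁' ◁ (η_ X₂' Y₂' ≫ c₂ ▷ Y₂') ▷ Y₁' ≫ c₁ ▷ ((X₂ ⊗ Y₂') ⊗ Y₁')) ⊗≫ 𝟙 _ := by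
        rw [tensorHom_def']; monoidal
    _ = (η_ X₁' Y₁' ≫ c₁ ▷ Y₁') ⊗≫ X₁ ◁ (η_ X₂ Y₂ ≫ X₂ ◁ f₂) ▷ Y₁' ⊗≫ 𝟙 _ := by
        rw [h₂, whisker_exchange]; monoidal
    _ = η_ X₁ Y₁ ⊗≫ X₁ ◁ (𝟙_ C ◁ f₁ ≫ (η_ X₂ Y₂ ≫ X₂ ◁ f₂) ▷ Y₁') ⊗≫ 𝟙 _ := by
        rw [h₁]; monoidal
    _ = _ := by
        rw [whisker_exchange, MonoidalCategory.tensorHom_def]; monoidal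

open BraidedCategory in
/-- Slide the inner cup `η_ X₁ Y₁` out under the `X₂`-strand, exchange the two cups, and slide
`η_ X₂ Y₂` back in under the `Y₁`-strand. -/
theorem isLeftAdjointMate_braiding_inv [BraidedCategory C] :
    IsLeftAdjointMate (β_ Y₁ Y₂).inv (β_ X₁ X₂).inv := by
  unfold IsLeftAdjointMate
  rw [ExactPairing.tensor_coevaluation, ExactPairing.tensor_coevaluation]
  calc _
      = 𝟙 _ ⊗≫ η_ X₂ Y₂ ⊗≫ X₂ ◁ (η_ X₁ Y₁ ▷ Y₂) ⊗≫ ((β_ X₁ X₂).inv ▷ Y₁) ▷ Y₂ ⊗≫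
          (X₁ ◁ ((β_ Y₁ X₂).inv ≫ (β_ Y₁ X₂).hom)) ▷ Y₂ ⊗≫ 𝟙 _ := by
        rw [Iso.inv_hom_id]; monoidal
    _ = 𝟙 _ ⊗≫ η_ X₂ Y₂ ⊗≫ ((X₂ ◁ η_ X₁ Y₁ ≫ (β_ (X₁ ⊗ Y₁) X₂).inv) ▷ Y₂) ⊗≫
          (X₁ ◁ (β_ Y₁ X₂).hom) ▷ Y₂ ⊗≫ 𝟙 _ := by
        rw [braiding_tensor_left_inv]; monoidal
    _ = 𝟙 _ ⊗≫ η_ X₂ Y₂ ⊗≫ (((β_ (𝟙_ C) X₂).inv ≫ η_ X₁ Y₁ ▷ X₂) ▷ Y₂) ⊗≫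
          (X₁ ◁ (β_ Y₁ X₂).hom) ▷ Y₂ ⊗≫ 𝟙 _ := by
        rw [braiding_inv_naturality_right X₂ (η_ X₁ Y₁)]
    _ = 𝟙 _ ⊗≫ ((𝟙_ C) ◁ η_ X₂ Y₂ ≫ η_ X₁ Y₁ ▷ (X₂ ⊗ Y₂)) ⊗≫
          (X₁ ◁ (β_ Y₁ X₂).hom) ▷ Y₂ ⊗≫ 𝟙 _ := by
        rw [braiding_inv_tensorUnit_left]; monoidal
    _ = 𝟙 _ ⊗≫ (η_ X₁ Y₁ ▷ (𝟙_ C) ≫ (X₁ ⊗ Y₁) ◁ η_ X₂ Y₂) ⊗≫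
          (X₁ ◁ (β_ Y₁ X₂).hom) ▷ Y₂ ⊗≫ 𝟙 _ := by
        rw [← whisker_exchange]
    _ = 𝟙 _ ⊗≫ η_ X₁ Y₁ ⊗≫ X₁ ◁ ((β_ Y₁ (𝟙_ C)).inv ≫ Y₁ ◁ η_ X₂ Y₂) ⊗≫
          X₁ ◁ ((β_ Y₁ X₂).hom ▷ Y₂) ⊗≫ 𝟙 _ := by
        rw [braiding_inv_tensorUnit_right]; monoidal
    _ = 𝟙 _ ⊗≫ η_ X₁ Y₁ ⊗≫
          X₁ ◁ (η_ X₂ Y₂ ▷ Y₁ ≫ (β_ Y₁ (X₂ ⊗ Y₂)).inv) ⊗≫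
          X₁ ◁ ((β_ Y₁ X₂).hom ▷ Y₂) ⊗≫ 𝟙 _ := by
        rw [braiding_inv_naturality_left (η_ X₂ Y₂) Y₁]
    _ = 𝟙 _ ⊗≫ η_ X₁ Y₁ ⊗≫ X₁ ◁ (η_ X₂ Y₂ ▷ Y₁) ⊗≫
          X₁ ◁ (X₂ ◁ (β_ Y₁ Y₂).inv) ⊗≫
          X₁ ◁ (((β_ Y₁ X₂).inv ≫ (β_ Y₁ X₂).hom) ▷ Y₂) ⊗≫ 𝟙 _ := by
        rw [braiding_tensor_right_inv]; monoidal
    _ = _ := by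
        rw [Iso.inv_hom_id]; monoidal

end Tensor

end CategoryTheory

section Dagger

variable {C : Type*} [Category C] [MonoidalCategory C] [RigidCategory C]

-- `ᘁ(Xᘁ)` is `X` with the same pairing, so `doubleDualIso X` is the identity.
theorem daggerAntiTwist_eq_leftAdjointMate (ς : ∀ X : C, X ⟶ X) (X : C) :
    daggerAntiTwist ς X = ᘁ(ς (Xᘁ)) := by
  simp [daggerAntiTwist, show doubleDualIso X = Iso.refl X from leftDualIso_id _]

theorem isLeftAdjointMate_daggerAntiTwist (ς : ∀ X : C, X ⟶ X) (X : C) :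
    IsLeftAdjointMate (ς (Xᘁ)) (daggerAntiTwist ς X) := by
  rw [daggerAntiTwist_eq_leftAdjointMate]
  exact isLeftAdjointMate_leftAdjointMate (ς (Xᘁ))

theorem isIso_daggerAntiTwist {ς : ∀ X : C, X ⟶ X} (hς : ∀ X, IsIso (ς X)) (X : C) :
    IsIso (daggerAntiTwist ς X) :=
  have := hς (Xᘁ)
  (isLeftAdjointMate_daggerAntiTwist ς X).isIso

theorem daggerAntiTwist_naturality {ς : ∀ X : C, X ⟶ X}
    (hς : ∀ {X Y : C} (f : X ⟶ Y), ς X ≫ f = f ≫ ς Y) {X Y : C} (f : X ⟶ Y) :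
    daggerAntiTwist ς X ≫ f = f ≫ daggerAntiTwist ς Y := by
  have h₁ := (isLeftAdjointMate_rightAdjointMate f).comp (isLeftAdjointMate_daggerAntiTwist ς X)
  have h₂ := (isLeftAdjointMate_daggerAntiTwist ς Y).comp (isLeftAdjointMate_rightAdjointMate f)
  rw [hς] at h₂
  exact h₁.unique h₂

theorem daggerAntiTwist_tensor [BraidedCategory C] {ς : ∀ X : C, X ⟶ X}
    (hnat : ∀ {X Y : C} (f : X ⟶ Y), ς X ≫ f = f ≫ ς Y)
    (hten : ∀ X Y : C, ς (X ⊗ Y) = (ς X ⊗ₘ ς Y) ≫ (β_ Y X).inv ≫ (β_ X Y).inv) (X Y : C) :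
    daggerAntiTwist ς (X ⊗ Y) =
      (daggerAntiTwist ς X ⊗ₘ daggerAntiTwist ς Y) ≫ (β_ Y X).inv ≫ (β_ X Y).inv := by
  have h := ((isLeftAdjointMate_daggerAntiTwist ς X).tensorHom
    (isLeftAdjointMate_daggerAntiTwist ς Y)).comp
    (isLeftAdjointMate_braiding_inv.comp isLeftAdjointMate_braiding_inv)
  rw [← hten] at h
  rw [(isLeftAdjointMate_daggerAntiTwist ς (X ⊗ Y)).unique (h.congr_rightDual hnat)]
  simp

end Dagger

/-- If `ς` is an anti-twist on a rigid braided category `B`, then `ς†` is again an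
anti-twist on `B`. -/
theorem isAntiTwist_dagger (ς : ∀ X : B, X ⟶ X) (hς : IsAntiTwist ς) :
    IsAntiTwist (daggerAntiTwist ς) :=
  let ⟨hiso, hnat, hten⟩ := hς
  ⟨isIso_daggerAntiTwist hiso, daggerAntiTwist_naturality hnat, daggerAntiTwist_tensor hnat hten⟩

end Rigid
end

section
/- Let B be a braided category, (M, Φ) a B-module category, E a braided B-module structure on (M, Φ), A a monoid object in B, and (M, ρ) an A-module in M. Then ρ̂ := ρ ∘ E_{A,M} : A·M → M is again an A-module structure on M. If moreover ς is a stable structure for E, then ς_M is an isomorphism of A-modules from (M, ρ) to (M, ρ̂), i.e. ς_M ∘ ρ = ρ̂ ∘ Φ(A)(ς_M). -/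
/-! For fixed `X`, the components `E_{X,-}` form a natural automorphism of `Φ(X)`; naturality in
`X` makes it commute with `Φ(η_A)` and `Φ(μ_A)`, and (C2) says how it behaves on `A ⊗ A`.
At `X = 𝟙` it is the identity: (C2) for `𝟙 ⊗ 𝟙`, compared with naturality along `λ_𝟙`, forces
`E_{𝟙,𝟙·M} = 𝟙`, and naturality along the unit isomorphism `𝟙·M ≅ M` transports this to `E_{𝟙,M}`.
These facts turn the unit and associativity laws of `ρ` into those of `ρ ∘ E_{A,M}`.
For a stable structure, `ς_M ∘ ρ = ρ ∘ ς_{A·M}` by naturality of `ς`, and stability rewrites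
`ς_{A·M}` as `E_{A,M} ∘ Φ(A)(ς_M)`. -/

open CategoryTheory MonoidalCategory

universe v u v₂ u₂

variable {𝓑 : Type u} [Category.{v} 𝓑] [MonoidalCategory 𝓑] [BraidedCategory 𝓑]
variable {𝓜 : Type u₂} [Category.{v₂} 𝓜]

/-- A (left) module category over a monoidal category `𝓑`, presented as data: an action
bifunctor together with coherent unit and associativity structure isomorphisms. -/
structure ModuleCategoryStruct (𝓑 : Type u) (𝓜 : Type u₂) [Category.{v} 𝓑]
    [MonoidalCategory 𝓑] [Category.{v₂} 𝓜] where
  act : 𝓑 ⥤ 𝓜 ⥤ 𝓜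
  unitIso : act.obj (𝟙_ 𝓑) ≅ 𝟭 𝓜
  assocIso : ∀ X Y : 𝓑, act.obj (X ⊗ Y) ≅ act.obj Y ⋙ act.obj X
  assoc_natural : ∀ {X X' Y Y' : 𝓑} (f : X ⟶ X') (g : Y ⟶ Y'),
    act.map (f ⊗ₘ g) ≫ (assocIso X' Y').hom =
      (assocIso X Y).hom ≫ CategoryTheory.Functor.whiskerRight (act.map g) (act.obj X) ≫
        CategoryTheory.Functor.whiskerLeft (act.obj Y') (act.map f)
  pentagon : ∀ X Y Z : 𝓑,
    (assocIso (X ⊗ Y) Z).hom ≫ CategoryTheory.Functor.whiskerLeft (act.obj Z) (assocIso X Y).hom =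
      act.map (α_ X Y Z).hom ≫ (assocIso X (Y ⊗ Z)).hom ≫
        CategoryTheory.Functor.whiskerRight (assocIso Y Z).hom (act.obj X)
  triangle_right : ∀ X : 𝓑,
    act.map (ρ_ X).hom =
      (assocIso X (𝟙_ 𝓑)).hom ≫ CategoryTheory.Functor.whiskerRight unitIso.hom (act.obj X)
  triangle_left : ∀ X : 𝓑,
    act.map (λ_ X).hom =
      (assocIso (𝟙_ 𝓑) X).hom ≫ CategoryTheory.Functor.whiskerLeft (act.obj X) unitIso.hom

namespace ModuleCategoryStruct

variable (D : ModuleCategoryStruct 𝓑 𝓜)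

/-- Notation helper: the action of `X : 𝓑` on `m : 𝓜`. -/
def smul (X : 𝓑) (m : 𝓜) : 𝓜 := (D.act.obj X).obj m

/-- A braided `𝓑`-module structure on a module category `(𝓜, Φ)`: a family of
isomorphisms `E_{X,m} : X·m ⟶ X·m`, natural in `X` and `m`, satisfying (C1) and (C2). -/
structure BraidedModuleStructure where
  E : ∀ (X : 𝓑) (m : 𝓜), D.smul X m ⟶ D.smul X m
  iso : ∀ (X : 𝓑) (m : 𝓜), IsIso (E X m)
  nat_left : ∀ {X X' : 𝓑} (f : X ⟶ X') (m : 𝓜),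
    (D.act.map f).app m ≫ E X' m = E X m ≫ (D.act.map f).app m
  nat_right : ∀ (X : 𝓑) {m m' : 𝓜} (g : m ⟶ m'),
    (D.act.obj X).map g ≫ E X m' = E X m ≫ (D.act.obj X).map g
  C1 : ∀ (X Y : 𝓑) (m : 𝓜),
    E Y (D.smul X m) =
      (D.assocIso Y X).inv.app m ≫ (D.act.map (β_ X Y).inv).app m ≫
        (D.assocIso X Y).hom.app m ≫ (D.act.obj X).map (E Y m) ≫
        (D.assocIso X Y).inv.app m ≫ (D.act.map (β_ Y X).inv).app m ≫
        (D.assocIso Y X).hom.app m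
  C2 : ∀ (X Y : 𝓑) (m : 𝓜),
    E (Y ⊗ X) m =
      (D.assocIso Y X).hom.app m ≫ (D.act.obj Y).map (E X m) ≫ E Y (D.smul X m) ≫
        (D.assocIso Y X).inv.app m

/-- A stable structure on a braided `𝓑`-module: a natural automorphism `ς` of the
identity functor of `𝓜` with `E_{X,m} = ς_{X·m} ∘ Φ(X)(ς_m)⁻¹`. -/
structure StableStructure (Eb : D.BraidedModuleStructure) where
  ς : ∀ m : 𝓜, m ≅ m
  natural : ∀ {m m' : 𝓜} (g : m ⟶ m'), (ς m).hom ≫ g = g ≫ (ς m').hom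
  stability : ∀ (X : 𝓑) (m : 𝓜),
    Eb.E X m = (D.act.obj X).map (ς m).inv ≫ (ς (D.smul X m)).hom

/-- An `A`-module in `𝓜`, for a monoid object `A` in `𝓑`: an object `m` with a unital,
associative action `ρ : A·m ⟶ m`. -/
structure IsModuleObject (A : Mon 𝓑) (m : 𝓜) (ρ : D.smul A.X m ⟶ m) : Prop where
  unital : (D.act.map (MonObj.one : 𝟙_ 𝓑 ⟶ A.X)).app m ≫ ρ = D.unitIso.hom.app m
  assoc : (D.assocIso A.X A.X).hom.app m ≫ (D.act.obj A.X).map ρ ≫ ρ =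
    (D.act.map (MonObj.mul : A.X ⊗ A.X ⟶ A.X)).app m ≫ ρ

end ModuleCategoryStruct

open ModuleCategoryStruct

lemma CategoryTheory.NatTrans.eq_id_of_whiskerLeft_eq_id {C : Type*} [Category C] {F : C ⥤ C}
    (u : F ≅ 𝟭 C) {e : F ⟶ F} (h : Functor.whiskerLeft F e = 𝟙 _) : e = 𝟙 F := by
  ext m
  have h' : e.app (F.obj m) = 𝟙 _ := congr_app h m
  rw [← cancel_epi (F.map (u.hom.app m))]
  exact (e.naturality _).trans (by simp [h'])

namespace ModuleCategoryStruct.BraidedModuleStructure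

variable {D : ModuleCategoryStruct 𝓑 𝓜} (Eb : D.BraidedModuleStructure)

/-- Components are typed by `(D.act.obj X).obj m` rather than by the non-reducible
`D.smul X m`, so that `rw` and `simp` can reassociate through them. -/
def twist (X : 𝓑) : D.act.obj X ⟶ D.act.obj X where
  app m := Eb.E X m
  naturality _ _ g := Eb.nat_right X g

instance (X : 𝓑) : IsIso (Eb.twist X) :=
  @NatIso.isIso_of_isIso_app _ _ _ _ _ _ _ (Eb.iso X)

lemma act_map_comp_twist {X X' : 𝓑} (f : X ⟶ X') :
    D.act.map f ≫ Eb.twist X' = Eb.twist X ≫ D.act.map f := by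
  ext m
  exact Eb.nat_left f m

lemma twist_tensor_comp_assocIso_hom (X Y : 𝓑) :
    Eb.twist (Y ⊗ X) ≫ (D.assocIso Y X).hom =
      (D.assocIso Y X).hom ≫ Functor.whiskerRight (Eb.twist X) (D.act.obj Y) ≫
        Functor.whiskerLeft (D.act.obj X) (Eb.twist Y) := by
  ext m
  have hC2 : (Eb.twist (Y ⊗ X)).app m = (D.assocIso Y X).hom.app m ≫
      (D.act.obj Y).map ((Eb.twist X).app m) ≫ (Eb.twist Y).app ((D.act.obj X).obj m) ≫
      (D.assocIso Y X).inv.app m := Eb.C2 X Y m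
  simp [hC2]

lemma twist_unit : Eb.twist (𝟙_ 𝓑) = 𝟙 _ := by
  apply NatTrans.eq_id_of_whiskerLeft_eq_id D.unitIso
  have hu : Functor.whiskerLeft (D.act.obj (𝟙_ 𝓑)) D.unitIso.hom ≫ Eb.twist (𝟙_ 𝓑) =
      Functor.whiskerRight (Eb.twist (𝟙_ 𝓑)) (D.act.obj (𝟙_ 𝓑)) ≫
        Functor.whiskerLeft (D.act.obj (𝟙_ 𝓑)) D.unitIso.hom := by
    ext m
    exact (D.unitIso.hom.naturality ((Eb.twist (𝟙_ 𝓑)).app m)).symm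
  have h := Eb.act_map_comp_twist (λ_ (𝟙_ 𝓑)).hom
  rw [D.triangle_left, Category.assoc, ← Category.assoc (Eb.twist _),
    twist_tensor_comp_assocIso_hom, Category.assoc, cancel_epi, hu, Category.assoc,
    cancel_epi] at h
  exact (cancel_mono (Functor.whiskerLeft _ D.unitIso.hom)).mp (by simpa using h.symm)

theorem isModuleObject_E_comp {A : Mon 𝓑} {m : 𝓜} {ρ : (D.act.obj A.X).obj m ⟶ m}
    (hρ : D.IsModuleObject A m ρ) : D.IsModuleObject A m (Eb.E A.X m ≫ ρ) := by
  obtain ⟨hunital, hassoc⟩ := hρ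
  have hone := congr_app (Eb.act_map_comp_twist (MonObj.one : 𝟙_ 𝓑 ⟶ A.X)) m
  have hmul := congr_app (Eb.act_map_comp_twist (MonObj.mul : A.X ⊗ A.X ⟶ A.X)) m
  have htensor := congr_app (Eb.twist_tensor_comp_assocIso_hom A.X A.X) m
  rw [twist_unit] at hone
  simp only [NatTrans.comp_app, Category.id_comp, Functor.whiskerRight_app,
    Functor.whiskerLeft_app] at hone hmul htensor
  set e := Eb.twist A.X
  set α := (D.assocIso A.X A.X).hom.app m
  constructor
  · change (D.act.map MonObj.one).app m ≫ e.app m ≫ ρ = _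
    rw [← Category.assoc, hone, hunital]
  · change α ≫ (D.act.obj A.X).map (e.app m ≫ ρ) ≫ e.app m ≫ ρ =
      (D.act.map MonObj.mul).app m ≫ e.app m ≫ ρ
    calc _ = α ≫ (D.act.obj A.X).map (e.app m) ≫ ((D.act.obj A.X).map ρ ≫ e.app m) ≫ ρ := by
          simp
      _ = α ≫ (D.act.obj A.X).map (e.app m) ≫
          (e.app ((D.act.obj A.X).obj m) ≫ (D.act.obj A.X).map ρ) ≫ ρ := by
          rw [e.naturality ρ]
      _ = (Eb.twist (A.X ⊗ A.X)).app m ≫ α ≫ (D.act.obj A.X).map ρ ≫ ρ := by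
          rw [← Category.assoc ((Eb.twist (A.X ⊗ A.X)).app m), htensor]
          simp
      _ = (Eb.twist (A.X ⊗ A.X)).app m ≫ (D.act.map MonObj.mul).app m ≫ ρ := by
          rw [hassoc]
      _ = _ := by
          rw [← Category.assoc, ← hmul, Category.assoc]

end ModuleCategoryStruct.BraidedModuleStructure

lemma ModuleCategoryStruct.StableStructure.comp_hom_eq_map_hom_comp_E
    {D : ModuleCategoryStruct 𝓑 𝓜} {Eb : D.BraidedModuleStructure} (ς : D.StableStructure Eb)
    (X : 𝓑) {m : 𝓜} (f : (D.act.obj X).obj m ⟶ m) :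
    f ≫ (ς.ς m).hom = (D.act.obj X).map (ς.ς m).hom ≫ Eb.E X m ≫ f := by
  have hstab : (Eb.twist X).app m =
      (D.act.obj X).map (ς.ς m).inv ≫ (ς.ς ((D.act.obj X).obj m)).hom := ς.stability X m
  change _ = _ ≫ (Eb.twist X).app m ≫ f
  rw [hstab, ← ς.natural f]
  simp

theorem twisted_action_isModuleObject_and_stable_iso
    (D : ModuleCategoryStruct 𝓑 𝓜) (Eb : D.BraidedModuleStructure)
    (A : Mon 𝓑) (m : 𝓜) (ρ : D.smul A.X m ⟶ m) (hρ : D.IsModuleObject A m ρ) :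
    D.IsModuleObject A m (Eb.E A.X m ≫ ρ) ∧
    (∀ ς : D.StableStructure Eb,
      ρ ≫ (ς.ς m).hom =
        (D.act.obj A.X).map (ς.ς m).hom ≫ (Eb.E A.X m ≫ ρ)) :=
  ⟨Eb.isModuleObject_E_comp hρ, fun ς => ς.comp_hom_eq_map_hom_comp_E A.X ρ⟩
end

section
/- Let k be a field of characteristic zero, p = 2m + 1 an odd prime, ξ ∈ k a primitive p-th root of unity, q := ξ^m (so q² = ξ⁻¹ and q is a primitive p-th root of unity), and μ an integer. Let D be the quotient of the free k-algebra on generators x, z, g by the two-sided ideal generated by the relations x^p = 0, z^p = 0, g^p = 1, gx = ξ·xg, gz = ξ⁻¹·zg, and xz − ξ·zx = ξ^{1−μ}·g^{p−2} − 1. Let U := u_q(sl₂) be the quotient of the free k-algebra on generators E, F, K by the two-sided ideal generated by E^p = 0, F^p = 0, K^p = 1, KE = q²·EK, KF = q⁻²·FK, and EF − FE = K − K^{p−1}. Then the assignment E ↦ q^{1−μ}·x, F ↦ z·g, K ↦ q^{μ−1}·g^{p−1} extends to an isomorphism of k-algebras U ≅ D. -/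
open FreeAlgebra

section aux
variable {k A : Type*} [CommSemiring k] [Semiring A] [Algebra k A]

theorem aux_pow_mul_smul (c : k) (g z : A) (h : g * z = c • (z * g)) :
    ∀ n : ℕ, g ^ n * z = c ^ n • (z * g ^ n)
  | 0 => by simp
  | n + 1 => by
    rw [pow_succ, mul_assoc, h, mul_smul_comm, ← mul_assoc, aux_pow_mul_smul c g z h n,
      smul_mul_assoc, smul_smul, mul_assoc, ← pow_succ, ← pow_succ']

theorem aux_mul_pow_smul (c : k) (g z : A) (h : g * z = c • (z * g)) (n : ℕ) :
    ∃ d : k, (z * g) ^ n = d • (z ^ n * g ^ n) := by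
  induction n with
  | zero => exact ⟨1, by simp⟩
  | succ n ih =>
    obtain ⟨d, hd⟩ := ih
    refine ⟨d * c ^ n, ?_⟩
    rw [pow_succ, hd, smul_mul_assoc, mul_assoc (z ^ n), ← mul_assoc (g ^ n),
      aux_pow_mul_smul c g z h n, smul_mul_assoc, mul_smul_comm, smul_smul]
    congr 1
    simp [pow_succ, mul_assoc]

end aux

/-- The relations presenting the algebra `D^a_μ(T_p(ξ))`: on the free algebra on
generators `x = ι 0`, `z = ι 1`, `g = ι 2`, impose `x^p = 0`, `z^p = 0`, `g^p = 1`,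
`g x = ξ·x g`, `g z = ξ⁻¹·z g`, and `x z − ξ·z x = ξ^{1−μ}·g^{p−2} − 1`. -/
inductive TaftDRel (k : Type*) [Field k] (ξ : k) (μ : ℤ) (p : ℕ) :
    FreeAlgebra k (Fin 3) → FreeAlgebra k (Fin 3) → Prop
  | x_pow : TaftDRel k ξ μ p (ι k (0 : Fin 3) ^ p) 0
  | z_pow : TaftDRel k ξ μ p (ι k (1 : Fin 3) ^ p) 0
  | g_pow : TaftDRel k ξ μ p (ι k (2 : Fin 3) ^ p) 1
  | gx : TaftDRel k ξ μ p (ι k (2 : Fin 3) * ι k (0 : Fin 3))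
      (ξ • (ι k (0 : Fin 3) * ι k (2 : Fin 3)))
  | gz : TaftDRel k ξ μ p (ι k (2 : Fin 3) * ι k (1 : Fin 3))
      (ξ⁻¹ • (ι k (1 : Fin 3) * ι k (2 : Fin 3)))
  | xz : TaftDRel k ξ μ p
      (ι k (0 : Fin 3) * ι k (1 : Fin 3) - ξ • (ι k (1 : Fin 3) * ι k (0 : Fin 3)))
      (ξ ^ ((1 : ℤ) - μ) • ι k (2 : Fin 3) ^ (p - 2) - 1)

/-- The relations presenting `u_q(sl₂)`: on the free algebra on generators `E = ι 0`,
`F = ι 1`, `K = ι 2`, impose `E^p = 0`, `F^p = 0`, `K^p = 1`, `K E = q²·E K`,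
`K F = q⁻²·F K`, and `E F − F E = K − K^{p−1}`. -/
inductive UqSl2Rel (k : Type*) [Field k] (q : k) (p : ℕ) :
    FreeAlgebra k (Fin 3) → FreeAlgebra k (Fin 3) → Prop
  | E_pow : UqSl2Rel k q p (ι k (0 : Fin 3) ^ p) 0
  | F_pow : UqSl2Rel k q p (ι k (1 : Fin 3) ^ p) 0
  | K_pow : UqSl2Rel k q p (ι k (2 : Fin 3) ^ p) 1
  | KE : UqSl2Rel k q p (ι k (2 : Fin 3) * ι k (0 : Fin 3))
      (q ^ 2 • (ι k (0 : Fin 3) * ι k (2 : Fin 3)))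
  | KF : UqSl2Rel k q p (ι k (2 : Fin 3) * ι k (1 : Fin 3))
      (q ^ (-2 : ℤ) • (ι k (1 : Fin 3) * ι k (2 : Fin 3)))
  | EF : UqSl2Rel k q p
      (ι k (0 : Fin 3) * ι k (1 : Fin 3) - ι k (1 : Fin 3) * ι k (0 : Fin 3))
      (ι k (2 : Fin 3) - ι k (2 : Fin 3) ^ (p - 1))

/-- Let `p = 2m+1` be an odd prime, `ξ` a primitive `p`-th root of unity in a field `k`
of characteristic zero, `q := ξ^m`, and `μ` an integer.  Then the assignment
`E ↦ q^{1−μ}·x`, `F ↦ z·g`, `K ↦ q^{μ−1}·g^{p−1}` extends to an isomorphism of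
`k`-algebras `u_q(sl₂) ≅ D^a_μ(T_p(ξ))`. -/
theorem uqsl2_iso_taftD {k : Type*} [Field k] [CharZero k]
    (p m : ℕ) (hp : p.Prime) (hpm : p = 2 * m + 1)
    (ξ q : k) (hξ : IsPrimitiveRoot ξ p) (hq : q = ξ ^ m) (μ : ℤ) :
    ∃ φ : RingQuot (UqSl2Rel k q p) ≃ₐ[k] RingQuot (TaftDRel k ξ μ p),
      φ (RingQuot.mkAlgHom k (UqSl2Rel k q p) (ι k (0 : Fin 3)))
          = q ^ ((1 : ℤ) - μ) • RingQuot.mkAlgHom k (TaftDRel k ξ μ p) (ι k (0 : Fin 3)) ∧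
      φ (RingQuot.mkAlgHom k (UqSl2Rel k q p) (ι k (1 : Fin 3)))
          = RingQuot.mkAlgHom k (TaftDRel k ξ μ p) (ι k (1 : Fin 3)) *
            RingQuot.mkAlgHom k (TaftDRel k ξ μ p) (ι k (2 : Fin 3)) ∧
      φ (RingQuot.mkAlgHom k (UqSl2Rel k q p) (ι k (2 : Fin 3)))
          = q ^ (μ - 1) •
            RingQuot.mkAlgHom k (TaftDRel k ξ μ p) (ι k (2 : Fin 3)) ^ (p - 1) := by
  classical
  have hp2 : 2 ≤ p := hp.two_le
  have hp3 : 3 ≤ p := by omega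
  have hξp : ξ ^ p = 1 := hξ.pow_eq_one
  have hξ0 : ξ ≠ 0 := hξ.ne_zero (by omega)
  have hq0 : q ≠ 0 := by rw [hq]; exact pow_ne_zero m hξ0
  have hqp : q ^ p = 1 := by rw [hq, ← pow_mul, mul_comm, pow_mul, hξp, one_pow]
  have hq2ξ : q ^ 2 * ξ = 1 := by
    rw [hq, ← pow_mul, ← pow_succ, show m * 2 + 1 = p by omega, hξp]
  have hξn : ξ = q ^ (p - 2) := by
    have h2 : q ^ (p - 2) * q ^ 2 = 1 := by
      rw [← pow_add, show p - 2 + 2 = p by omega, hqp]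
    have h1 : ξ * q ^ 2 = 1 := by rw [mul_comm]; exact hq2ξ
    exact mul_right_cancel₀ (pow_ne_zero 2 hq0) (h1.trans h2.symm)
  have hkey : ∀ a b : ℤ, q ^ (a + (p : ℤ) * b) = q ^ a := by
    intro a b
    rw [zpow_add₀ hq0, zpow_mul, zpow_natCast, hqp, one_zpow, mul_one]
  have hξz : ξ = q ^ (-2 : ℤ) := by
    rw [hξn, ← zpow_natCast, show ((p - 2 : ℕ) : ℤ) = -2 + (p : ℤ) * 1 by omega, hkey]
  have hinv : q ^ ((1 : ℤ) - μ) * q ^ (μ - 1) = 1 := by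
    rw [← zpow_add₀ hq0, show (1 - μ) + (μ - 1) = 0 by ring, zpow_zero]
  have hA : (q ^ (μ - 1)) ^ (p - 1) = q ^ ((1 : ℤ) - μ) := by
    rw [← zpow_natCast (q ^ (μ - 1)), ← zpow_mul,
      show ((p - 1 : ℕ) : ℤ) = (p : ℤ) - 1 by omega,
      show (μ - 1) * ((p : ℤ) - 1) = (1 - μ) + (p : ℤ) * (μ - 1) by ring, hkey]
  have hB : ξ ^ ((1 : ℤ) - μ) * (q ^ (μ - 1)) ^ (p - 2) = 1 := by
    rw [hξz, ← zpow_mul, ← zpow_natCast (q ^ (μ - 1)), ← zpow_mul,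
      ← zpow_add₀ hq0, show ((p - 2 : ℕ) : ℤ) = (p : ℤ) - 2 by omega,
      show (-2) * (1 - μ) + (μ - 1) * ((p : ℤ) - 2) = 0 + (p : ℤ) * (μ - 1) by ring,
      hkey, zpow_zero]
  have hqξμ : q ^ ((1 : ℤ) - μ) * ξ ^ ((1 : ℤ) - μ) = q ^ (μ - 1) := by
    rw [hξz, ← zpow_mul, ← zpow_add₀ hq0,
      show (1 - μ) + (-2) * (1 - μ) = μ - 1 by ring]
  have hC : (q ^ (μ - 1)) ^ p = 1 := by
    rw [← zpow_natCast (q ^ (μ - 1)), ← zpow_mul,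
      show (μ - 1) * (p : ℤ) = 0 + (p : ℤ) * (μ - 1) by ring, hkey, zpow_zero]
  have hξpm : ξ ^ (p - 1) = q ^ 2 := by
    rw [hq, ← pow_mul]; congr 1; omega
  have hqneg : q ^ (-2 : ℤ) = (q ^ 2)⁻¹ := by
    rw [zpow_neg]; norm_cast
  have hD : (ξ⁻¹) ^ (p - 1) = q ^ (-2 : ℤ) := by
    rw [inv_pow, hξpm, hqneg]
  have hE7 : (q ^ 2) ^ (p - 1) = ξ := by
    rw [← pow_mul, show 2 * (p - 1) = p + (p - 2) by omega, pow_add, hqp, one_mul, ← hξn]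
  have hF8 : (q ^ (-2 : ℤ)) ^ (p - 1) = ξ⁻¹ := by
    rw [hqneg, inv_pow, hE7]
  have e1 : (p - 1) * (p - 1) = p * (p - 2) + 1 := by zify [hp2, show 1 ≤ p by omega]; ring
  have e2 : (p - 1) * (p - 2) = p * (p - 3) + 2 := by
    zify [hp2, hp3, show 1 ≤ p by omega]; ring
  -- generators
  set X := RingQuot.mkAlgHom k (TaftDRel k ξ μ p) (ι k (0 : Fin 3)) with hXdef
  set Z := RingQuot.mkAlgHom k (TaftDRel k ξ μ p) (ι k (1 : Fin 3)) with hZdef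
  set G := RingQuot.mkAlgHom k (TaftDRel k ξ μ p) (ι k (2 : Fin 3)) with hGdef
  set E := RingQuot.mkAlgHom k (UqSl2Rel k q p) (ι k (0 : Fin 3)) with hEdef
  set F := RingQuot.mkAlgHom k (UqSl2Rel k q p) (ι k (1 : Fin 3)) with hFdef
  set K := RingQuot.mkAlgHom k (UqSl2Rel k q p) (ι k (2 : Fin 3)) with hKdef
  -- relations in the target algebras
  have hXp : X ^ p = 0 := by
    simpa using RingQuot.mkAlgHom_rel k (TaftDRel.x_pow (k := k) (ξ := ξ) (μ := μ) (p := p))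
  have hZp : Z ^ p = 0 := by
    simpa using RingQuot.mkAlgHom_rel k (TaftDRel.z_pow (k := k) (ξ := ξ) (μ := μ) (p := p))
  have hGp : G ^ p = 1 := by
    simpa using RingQuot.mkAlgHom_rel k (TaftDRel.g_pow (k := k) (ξ := ξ) (μ := μ) (p := p))
  have hGX : G * X = ξ • (X * G) := by
    simpa using RingQuot.mkAlgHom_rel k (TaftDRel.gx (k := k) (ξ := ξ) (μ := μ) (p := p))
  have hGZ : G * Z = ξ⁻¹ • (Z * G) := by
    simpa using RingQuot.mkAlgHom_rel k (TaftDRel.gz (k := k) (ξ := ξ) (μ := μ) (p := p))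
  have hXZ : X * Z - ξ • (Z * X) = ξ ^ ((1 : ℤ) - μ) • G ^ (p - 2) - 1 := by
    simpa using RingQuot.mkAlgHom_rel k (TaftDRel.xz (k := k) (ξ := ξ) (μ := μ) (p := p))
  have hEp : E ^ p = 0 := by
    simpa using RingQuot.mkAlgHom_rel k (UqSl2Rel.E_pow (k := k) (q := q) (p := p))
  have hFp : F ^ p = 0 := by
    simpa using RingQuot.mkAlgHom_rel k (UqSl2Rel.F_pow (k := k) (q := q) (p := p))
  have hKp : K ^ p = 1 := by
    simpa using RingQuot.mkAlgHom_rel k (UqSl2Rel.K_pow (k := k) (q := q) (p := p))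
  have hKE : K * E = q ^ 2 • (E * K) := by
    simpa using RingQuot.mkAlgHom_rel k (UqSl2Rel.KE (k := k) (q := q) (p := p))
  have hKF : K * F = q ^ (-2 : ℤ) • (F * K) := by
    simpa using RingQuot.mkAlgHom_rel k (UqSl2Rel.KF (k := k) (q := q) (p := p))
  have hEF : E * F - F * E = K - K ^ (p - 1) := by
    simpa using RingQuot.mkAlgHom_rel k (UqSl2Rel.EF (k := k) (q := q) (p := p))
  -- useful consequences
  have hGpG : G ^ (p - 1) * G = 1 := by
    rw [← pow_succ, show p - 1 + 1 = p by omega, hGp]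
  have hGGp : G * G ^ (p - 1) = 1 := by
    rw [← pow_succ', show p - 1 + 1 = p by omega, hGp]
  have hKpK : K ^ (p - 1) * K = 1 := by
    rw [← pow_succ, show p - 1 + 1 = p by omega, hKp]
  have hKKp : K * K ^ (p - 1) = 1 := by
    rw [← pow_succ', show p - 1 + 1 = p by omega, hKp]
  have hGpp : G ^ ((p - 1) * (p - 1)) = G := by
    rw [e1, pow_add, pow_mul, hGp, one_pow, one_mul, pow_one]
  have hKpp : K ^ ((p - 1) * (p - 1)) = K := by
    rw [e1, pow_add, pow_mul, hKp, one_pow, one_mul, pow_one]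
  have hGsq : (q ^ (μ - 1) • G ^ (p - 1)) ^ (p - 1) = q ^ ((1 : ℤ) - μ) • G := by
    rw [smul_pow, hA, ← pow_mul, hGpp]
  have hKsq : (q ^ (μ - 1) • K ^ (p - 1)) ^ (p - 1) = q ^ ((1 : ℤ) - μ) • K := by
    rw [smul_pow, hA, ← pow_mul, hKpp]
  -- the forward algebra map
  set f : FreeAlgebra k (Fin 3) →ₐ[k] RingQuot (TaftDRel k ξ μ p) :=
    FreeAlgebra.lift k ![q ^ ((1 : ℤ) - μ) • X, Z * G, q ^ (μ - 1) • G ^ (p - 1)] with hfdef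
  have hf0 : f (ι k (0 : Fin 3)) = q ^ ((1 : ℤ) - μ) • X := by
    rw [hfdef, FreeAlgebra.lift_ι_apply]; rfl
  have hf1 : f (ι k (1 : Fin 3)) = Z * G := by
    rw [hfdef, FreeAlgebra.lift_ι_apply]; rfl
  have hf2 : f (ι k (2 : Fin 3)) = q ^ (μ - 1) • G ^ (p - 1) := by
    rw [hfdef, FreeAlgebra.lift_ι_apply]; rfl
  have hrelU : ∀ ⦃a b⦄, UqSl2Rel k q p a b → f a = f b := by
    intro a b r
    induction r with
    | E_pow => rw [map_pow, hf0, map_zero, smul_pow, hXp, smul_zero]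
    | F_pow =>
      rw [map_pow, hf1, map_zero]
      obtain ⟨d, hd⟩ := aux_mul_pow_smul ξ⁻¹ G Z hGZ p
      rw [hd, hZp, zero_mul, smul_zero]
    | K_pow =>
      rw [map_pow, hf2, map_one, smul_pow, pow_right_comm, hGp, one_pow, hC, one_smul]
    | KE =>
      rw [map_mul, map_smul, map_mul, hf0, hf2]
      rw [smul_mul_assoc, mul_smul_comm, aux_pow_mul_smul ξ G X hGX (p - 1), hξpm]
      rw [smul_mul_assoc, mul_smul_comm, smul_smul, smul_smul, smul_smul, smul_smul]
      congr 1
      ring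
    | KF =>
      rw [map_mul, map_smul, map_mul, hf1, hf2]
      have t1 : q ^ (μ - 1) • G ^ (p - 1) * (Z * G)
          = (q ^ (μ - 1) * q ^ (-2 : ℤ)) • Z := by
        rw [smul_mul_assoc, ← mul_assoc, aux_pow_mul_smul ξ⁻¹ G Z hGZ (p - 1), hD,
          smul_mul_assoc, mul_assoc, hGpG, mul_one, smul_smul]
      have t2 : Z * G * (q ^ (μ - 1) • G ^ (p - 1)) = q ^ (μ - 1) • Z := by
        rw [mul_smul_comm, mul_assoc, hGGp, mul_one]
      rw [t1, t2, smul_smul]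
      match_scalars
      ring
    | EF =>
      rw [map_sub, map_sub, map_mul, map_mul, map_pow, hf0, hf1, hf2, hGsq]
      have h0 := congrArg (fun t => t * G) hXZ
      simp only [sub_mul, smul_mul_assoc, one_mul, mul_assoc] at h0
      rw [← pow_succ, show p - 2 + 1 = p - 1 by omega] at h0
      have t1 : q ^ ((1 : ℤ) - μ) • X * (Z * G)
          = q ^ ((1 : ℤ) - μ) • (X * (Z * G)) := smul_mul_assoc _ _ _
      have t2 : Z * G * (q ^ ((1 : ℤ) - μ) • X)
          = q ^ ((1 : ℤ) - μ) • (ξ • (Z * (X * G))) := by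
        rw [mul_smul_comm, mul_assoc, hGX, mul_smul_comm]
      rw [t1, t2, ← smul_sub (q ^ ((1 : ℤ) - μ)) (X * (Z * G)) (ξ • (Z * (X * G))), h0,
        smul_sub, smul_smul, hqξμ]
  -- the backward algebra map
  set g : FreeAlgebra k (Fin 3) →ₐ[k] RingQuot (UqSl2Rel k q p) :=
    FreeAlgebra.lift k ![q ^ (μ - 1) • E, q ^ ((1 : ℤ) - μ) • (F * K),
      q ^ (μ - 1) • K ^ (p - 1)] with hgdef
  have hg0 : g (ι k (0 : Fin 3)) = q ^ (μ - 1) • E := by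
    rw [hgdef, FreeAlgebra.lift_ι_apply]; rfl
  have hg1 : g (ι k (1 : Fin 3)) = q ^ ((1 : ℤ) - μ) • (F * K) := by
    rw [hgdef, FreeAlgebra.lift_ι_apply]; rfl
  have hg2 : g (ι k (2 : Fin 3)) = q ^ (μ - 1) • K ^ (p - 1) := by
    rw [hgdef, FreeAlgebra.lift_ι_apply]; rfl
  have hrelD : ∀ ⦃a b⦄, TaftDRel k ξ μ p a b → g a = g b := by
    intro a b r
    induction r with
    | x_pow => rw [map_pow, hg0, map_zero, smul_pow, hEp, smul_zero]
    | z_pow =>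
      rw [map_pow, hg1, map_zero, smul_pow]
      obtain ⟨d, hd⟩ := aux_mul_pow_smul (q ^ (-2 : ℤ)) K F hKF p
      rw [hd, hFp, zero_mul, smul_zero, smul_zero]
    | g_pow =>
      rw [map_pow, hg2, map_one, smul_pow, pow_right_comm, hKp, one_pow, hC, one_smul]
    | gx =>
      rw [map_mul, map_smul, map_mul, hg2, hg0]
      have t1 : q ^ (μ - 1) • K ^ (p - 1) * (q ^ (μ - 1) • E)
          = (q ^ (μ - 1) * q ^ (μ - 1)) • (ξ • (E * K ^ (p - 1))) := by
        rw [smul_mul_assoc, mul_smul_comm, aux_pow_mul_smul (q ^ 2) K E hKE (p - 1), hE7,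
          smul_smul, smul_smul, ← smul_smul]
      have t2 : q ^ (μ - 1) • E * (q ^ (μ - 1) • K ^ (p - 1))
          = (q ^ (μ - 1) * q ^ (μ - 1)) • (E * K ^ (p - 1)) := by
        rw [smul_mul_assoc, mul_smul_comm, smul_smul]
      rw [t1, t2]
      match_scalars
      ring
    | gz =>
      rw [map_mul, map_smul, map_mul, hg2, hg1]
      have t1 : q ^ (μ - 1) • K ^ (p - 1) * (q ^ ((1 : ℤ) - μ) • (F * K))
          = (q ^ (μ - 1) * q ^ ((1 : ℤ) - μ) * ξ⁻¹) • F := by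
        rw [smul_mul_assoc, mul_smul_comm, ← mul_assoc,
          aux_pow_mul_smul (q ^ (-2 : ℤ)) K F hKF (p - 1), hF8,
          smul_mul_assoc, mul_assoc, hKpK, mul_one, smul_smul, smul_smul]
      have t2 : q ^ ((1 : ℤ) - μ) • (F * K) * (q ^ (μ - 1) • K ^ (p - 1))
          = (q ^ ((1 : ℤ) - μ) * q ^ (μ - 1)) • F := by
        rw [smul_mul_assoc, mul_smul_comm, mul_assoc, hKKp, mul_one, smul_smul]
      rw [t1, t2, smul_smul]
      match_scalars
      ring
    | xz =>
      rw [map_sub, map_mul, map_smul, map_mul, map_sub, map_smul, map_pow, map_one,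
        hg0, hg1, hg2]
      have h0 := congrArg (fun t => t * K) hEF
      simp only [sub_mul, mul_assoc] at h0
      rw [hKpK, ← pow_two] at h0
      -- h0 : E * (F * K) - F * (E * K) = K ^ 2 - 1
      have t1 : q ^ (μ - 1) • E * (q ^ ((1 : ℤ) - μ) • (F * K)) = E * (F * K) := by
        rw [smul_mul_assoc, mul_smul_comm, smul_smul]
        rw [show q ^ (μ - 1) * q ^ ((1 : ℤ) - μ) = 1 by
          rw [mul_comm]; exact hinv, one_smul]
      have t2 : ξ • (q ^ ((1 : ℤ) - μ) • (F * K) * (q ^ (μ - 1) • E)) = F * (E * K) := by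
        rw [smul_mul_assoc, mul_smul_comm, mul_assoc F K E, hKE, mul_smul_comm]
        match_scalars
        linear_combination ξ * q ^ 2 * hinv + hq2ξ
      have t3 : ξ ^ ((1 : ℤ) - μ) • (q ^ (μ - 1) • K ^ (p - 1)) ^ (p - 2) = K ^ 2 := by
        rw [smul_pow, ← pow_mul, e2, pow_add, pow_mul, hKp, one_pow, one_mul,
          smul_smul, hB, one_smul]
      rw [t1, t2, t3, h0]
  -- assemble
  set Φ : RingQuot (UqSl2Rel k q p) →ₐ[k] RingQuot (TaftDRel k ξ μ p) :=
    RingQuot.liftAlgHom k ⟨f, hrelU⟩ with hΦdef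
  set Ψ : RingQuot (TaftDRel k ξ μ p) →ₐ[k] RingQuot (UqSl2Rel k q p) :=
    RingQuot.liftAlgHom k ⟨g, hrelD⟩ with hΨdef
  have hΦE : Φ E = q ^ ((1 : ℤ) - μ) • X := by
    rw [hΦdef, hEdef, RingQuot.liftAlgHom_mkAlgHom_apply, hf0]
  have hΦF : Φ F = Z * G := by
    rw [hΦdef, hFdef, RingQuot.liftAlgHom_mkAlgHom_apply, hf1]
  have hΦK : Φ K = q ^ (μ - 1) • G ^ (p - 1) := by
    rw [hΦdef, hKdef, RingQuot.liftAlgHom_mkAlgHom_apply, hf2]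
  have hΨX : Ψ X = q ^ (μ - 1) • E := by
    rw [hΨdef, hXdef, RingQuot.liftAlgHom_mkAlgHom_apply, hg0]
  have hΨZ : Ψ Z = q ^ ((1 : ℤ) - μ) • (F * K) := by
    rw [hΨdef, hZdef, RingQuot.liftAlgHom_mkAlgHom_apply, hg1]
  have hΨG : Ψ G = q ^ (μ - 1) • K ^ (p - 1) := by
    rw [hΨdef, hGdef, RingQuot.liftAlgHom_mkAlgHom_apply, hg2]
  have hΦΨ : Φ.comp Ψ = AlgHom.id k (RingQuot (TaftDRel k ξ μ p)) := by
    refine RingQuot.ringQuot_ext' k _ _ (FreeAlgebra.hom_ext (funext fun i => ?_))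
    fin_cases i
    · show Φ (Ψ X) = X
      rw [hΨX, map_smul, hΦE, smul_smul]
      rw [show q ^ (μ - 1) * q ^ ((1 : ℤ) - μ) = 1 by rw [mul_comm]; exact hinv, one_smul]
    · show Φ (Ψ Z) = Z
      rw [hΨZ, map_smul, map_mul, hΦF, hΦK, mul_smul_comm, mul_assoc, hGGp, mul_one,
        smul_smul, hinv, one_smul]
    · show Φ (Ψ G) = G
      rw [hΨG, map_smul, map_pow, hΦK, hGsq, smul_smul]
      rw [show q ^ (μ - 1) * q ^ ((1 : ℤ) - μ) = 1 by rw [mul_comm]; exact hinv, one_smul]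
  have hΨΦ : Ψ.comp Φ = AlgHom.id k (RingQuot (UqSl2Rel k q p)) := by
    refine RingQuot.ringQuot_ext' k _ _ (FreeAlgebra.hom_ext (funext fun i => ?_))
    fin_cases i
    · show Ψ (Φ E) = E
      rw [hΦE, map_smul, hΨX, smul_smul, hinv, one_smul]
    · show Ψ (Φ F) = F
      rw [hΦF, map_mul, hΨZ, hΨG, smul_mul_assoc, mul_smul_comm, mul_assoc, hKKp,
        mul_one, smul_smul, hinv, one_smul]
    · show Ψ (Φ K) = K
      rw [hΦK, map_smul, map_pow, hΨG, hKsq, smul_smul]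
      rw [show q ^ (μ - 1) * q ^ ((1 : ℤ) - μ) = 1 by rw [mul_comm]; exact hinv, one_smul]
  refine ⟨AlgEquiv.ofAlgHom Φ Ψ hΦΨ hΨΦ, ?_, ?_, ?_⟩
  · exact hΦE
  · exact hΦF
  · exact hΦK
end

section
/- Let k be a field of characteristic zero, p = 2m + 1 an odd prime, ξ ∈ k a primitive p-th root of unity, and q := ξ^m. Then the Gauss sum G := Σ_{s=0}^{p−1} q^{m s²} is nonzero, and for all integers μ and i, setting t := q^{μ−1} ξ^{−i}, the identity ξ^{−i² − μ i} · G = q^{m(μ² − 1)} · t · Σ_{j=0}^{p−1} q^{m j²} t^{j} holds in k. -/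
open Finset

private lemma sum_range_eq_sum_zmod (p : ℕ) [NeZero p] {k : Type*} [AddCommMonoid k]
    (f : ZMod p → k) : ∑ s ∈ range p, f (s : ZMod p) = ∑ x : ZMod p, f x := by
  refine Finset.sum_nbij' (fun s => (s : ZMod p)) (fun x => x.val) ?_ ?_
    (fun a ha => ZMod.val_cast_of_lt (mem_range.mp ha)) ?_ ?_ <;>
    simp [ZMod.val_lt]

private lemma zpow_congr_of_cast_eq {k : Type*} [Field k] (p : ℕ) [NeZero p] {ξ : k}
    (hξ : IsPrimitiveRoot ξ p) {a b : ℤ} (h : (a : ZMod p) = (b : ZMod p)) :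
    ξ ^ a = ξ ^ b := by
  rw [ZMod.intCast_eq_intCast_iff] at h
  have h1 := (hξ.zpow_eq_one_iff_dvd (a - b)).mpr (Int.ModEq.dvd h.symm)
  have hξ0 : ξ ≠ 0 := hξ.ne_zero (NeZero.ne p)
  calc ξ ^ a = ξ ^ (b + (a - b)) := by ring_nf
    _ = ξ ^ b * ξ ^ (a - b) := zpow_add₀ hξ0 _ _
    _ = ξ ^ b := by rw [h1, mul_one]

/-- Let `p = 2m+1` be an odd prime, `ξ` a primitive `p`-th root of unity in a field `k`
of characteristic zero, and `q := ξ^m`.  Then the Gauss sum `G := Σ_{s<p} q^{m s²}` is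
nonzero, and for all integers `μ`, `i`, setting `t := q^{μ−1} ξ^{−i}`, one has
`ξ^{−i² − μ i} · G = q^{m(μ² − 1)} · t · Σ_{j<p} q^{m j²} t^j`. -/
theorem gauss_sum_sigma_identity {k : Type*} [Field k] [CharZero k]
    (p m : ℕ) (hp : p.Prime) (hpm : p = 2 * m + 1)
    (ξ q : k) (hξ : IsPrimitiveRoot ξ p) (hq : q = ξ ^ m) :
    (∑ s ∈ range p, q ^ (m * s ^ 2)) ≠ 0 ∧
    ∀ μ i : ℤ,
      ξ ^ (-i ^ 2 - μ * i) * ∑ s ∈ range p, q ^ (m * s ^ 2)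
        = q ^ ((m : ℤ) * (μ ^ 2 - 1)) * (q ^ (μ - 1) * ξ ^ (-i)) *
            ∑ j ∈ range p, q ^ (m * j ^ 2) * (q ^ (μ - 1) * ξ ^ (-i)) ^ j := by
  haveI : Fact p.Prime := ⟨hp⟩
  haveI : NeZero p := ⟨hp.ne_zero⟩
  have hξ1 : ξ ^ p = 1 := hξ.pow_eq_one
  set ψ : AddChar (ZMod p) k := AddChar.zmodChar p hξ1 with hψdef
  set m' : ZMod p := (m : ZMod p) with hm'
  have keyN : ∀ n : ℕ, ξ ^ n = ψ ((n : ZMod p)) :=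
    fun n => (AddChar.zmodChar_apply' hξ1 n).symm
  have keyZ : ∀ n : ℤ, ξ ^ n = ψ ((n : ZMod p)) := by
    intro n
    have h1 : ξ ^ n = ξ ^ (((n : ZMod p).val : ℤ)) := by
      refine zpow_congr_of_cast_eq p hξ ?_
      push_cast
      exact (ZMod.natCast_rightInverse _).symm
    rw [h1, zpow_natCast, keyN, ZMod.natCast_rightInverse]
  have hqZ : ∀ e : ℤ, q ^ e = ψ ((((m : ℤ) * e : ℤ) : ZMod p)) := by
    intro e
    rw [hq, ← zpow_natCast ξ m, ← zpow_mul, keyZ]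
  have hqN : ∀ e : ℕ, q ^ e = ψ (((m * e : ℕ) : ZMod p)) := by
    intro e
    rw [hq, ← pow_mul, keyN]
  have h2m : 2 * m' + 1 = 0 := by
    have h : ((2 * m + 1 : ℕ) : ZMod p) = 0 := by rw [← hpm]; exact ZMod.natCast_self p
    push_cast at h
    exact h
  have hprim : ψ.IsPrimitive := AddChar.zmodChar_primitive_of_primitive_root p hξ
  have horth : ∀ c : ZMod p, c ≠ 0 → ∑ y : ZMod p, ψ (c * y) = 0 := by
    intro c hc
    have h1 : ψ.mulShift c ≠ 1 := hprim hc
    rw [AddChar.one_eq_zero] at h1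
    have h2 := AddChar.sum_eq_zero_iff_ne_zero.mpr h1
    simpa [AddChar.mulShift_apply] using h2
  have hG : ∑ s ∈ range p, q ^ (m * s ^ 2) = ∑ x : ZMod p, ψ (m' ^ 2 * x ^ 2) := by
    rw [← sum_range_eq_sum_zmod p fun x => ψ (m' ^ 2 * x ^ 2)]
    refine Finset.sum_congr rfl fun s _ => ?_
    rw [hqN]
    congr 1
    push_cast
    ring
  have hm0 : m' ≠ 0 := by
    intro h
    rw [h] at h2m
    simp at h2m
  have h20 : (2 : ZMod p) ≠ 0 := by
    have hm1 : 1 ≤ m := by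
      rcases Nat.eq_zero_or_pos m with h | h
      · exfalso; rw [h] at hpm; exact Nat.Prime.one_lt hp |>.ne' (by omega)
      · exact h
    intro h
    have h2 : ((2 : ℕ) : ZMod p) = 0 := by exact_mod_cast h
    rw [ZMod.natCast_eq_zero_iff] at h2
    have := Nat.le_of_dvd (by norm_num) h2
    omega
  constructor
  · rw [hG]
    intro h0
    have hST : (∑ x : ZMod p, ψ (m' ^ 2 * x ^ 2)) * (∑ y : ZMod p, ψ (-(m' ^ 2) * y ^ 2))
        = (p : k) := by
      rw [Finset.sum_mul_sum]
      calc ∑ x : ZMod p, ∑ y : ZMod p, ψ (m' ^ 2 * x ^ 2) * ψ (-(m' ^ 2) * y ^ 2)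
          = ∑ y : ZMod p, ∑ x : ZMod p, ψ (m' ^ 2 * x ^ 2 - m' ^ 2 * y ^ 2) := by
            rw [Finset.sum_comm]
            refine Finset.sum_congr rfl fun y _ => Finset.sum_congr rfl fun x _ => ?_
            rw [← ψ.map_add_eq_mul]
            congr 1
            ring
        _ = ∑ y : ZMod p, ∑ u : ZMod p, ψ (m' ^ 2 * u ^ 2) * ψ ((2 * m' ^ 2 * u) * y) := by
            refine Finset.sum_congr rfl fun y _ => ?_
            refine Fintype.sum_equiv (Equiv.subRight y) _ _ fun x => ?_
            rw [← ψ.map_add_eq_mul]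
            congr 1
            simp only [Equiv.subRight_apply]
            ring
        _ = ∑ u : ZMod p, ψ (m' ^ 2 * u ^ 2) * ∑ y : ZMod p, ψ ((2 * m' ^ 2 * u) * y) := by
            rw [Finset.sum_comm]
            exact Finset.sum_congr rfl fun u _ => (Finset.mul_sum _ _ _).symm
        _ = ψ (m' ^ 2 * 0 ^ 2) * ∑ y : ZMod p, ψ ((2 * m' ^ 2 * 0) * y) := by
            refine Finset.sum_eq_single 0 (fun u _ hu => ?_) (by simp)
            rw [horth _ (mul_ne_zero (mul_ne_zero h20 (pow_ne_zero 2 hm0)) hu), mul_zero]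
        _ = (p : k) := by
            simp [ZMod.card]
    rw [h0, zero_mul] at hST
    exact (Nat.cast_ne_zero.mpr hp.ne_zero) hST.symm
  · intro μ i
    set M : ZMod p := ((μ : ℤ) : ZMod p) with hM
    set I : ZMod p := ((i : ℤ) : ZMod p) with hI
    have hLterm : ∀ s : ℕ, ξ ^ (-i ^ 2 - μ * i) * q ^ (m * s ^ 2)
        = ψ ((-I ^ 2 - M * I) + m' ^ 2 * (s : ZMod p) ^ 2) := by
      intro s
      rw [keyZ, hqN, ← ψ.map_add_eq_mul]
      congr 1
      push_cast
      ring
    have hRterm : ∀ j : ℕ,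
        q ^ ((m : ℤ) * (μ ^ 2 - 1)) * (q ^ (μ - 1) * ξ ^ (-i)) *
            (q ^ (m * j ^ 2) * (q ^ (μ - 1) * ξ ^ (-i)) ^ j)
        = ψ ((m' ^ 2 * (M ^ 2 - 1) + m' * (M - 1) - I) + m' ^ 2 * (j : ZMod p) ^ 2
            + (m' * (M - 1) - I) * (j : ZMod p)) := by
      intro j
      rw [mul_pow, ← zpow_natCast (q ^ (μ - 1)) j, ← zpow_mul,
        ← zpow_natCast (ξ ^ (-i)) j, ← zpow_mul,
        hqZ, hqZ, hqZ, hqN, keyZ, keyZ,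
        ← ψ.map_add_eq_mul, ← ψ.map_add_eq_mul, ← ψ.map_add_eq_mul, ← ψ.map_add_eq_mul,
        ← ψ.map_add_eq_mul]
      congr 1
      push_cast
      ring
    calc ξ ^ (-i ^ 2 - μ * i) * ∑ s ∈ range p, q ^ (m * s ^ 2)
        = ∑ s ∈ range p, ψ ((-I ^ 2 - M * I) + m' ^ 2 * ((s : ZMod p)) ^ 2) := by
          rw [Finset.mul_sum]
          exact Finset.sum_congr rfl fun s _ => hLterm s
      _ = ∑ x : ZMod p, ψ ((-I ^ 2 - M * I) + m' ^ 2 * x ^ 2) :=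
          sum_range_eq_sum_zmod p (fun x => ψ ((-I ^ 2 - M * I) + m' ^ 2 * x ^ 2))
      _ = ∑ x : ZMod p, ψ ((m' ^ 2 * (M ^ 2 - 1) + m' * (M - 1) - I) + m' ^ 2 * x ^ 2
            + (m' * (M - 1) - I) * x) := by
          refine Fintype.sum_equiv (Equiv.addRight (M - 1 + 2 * I)) _ _ fun x => ?_
          simp only [Equiv.coe_addRight]
          congr 1
          linear_combination (-(m' * (M ^ 2 + M * x - x + 2 * I * x - M + 2 * I * M - 2 * I
            + 2 * I ^ 2) - I * x - I ^ 2)) * h2m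
      _ = ∑ j ∈ range p, q ^ (m * j ^ 2) * (q ^ (μ - 1) * ξ ^ (-i)) ^ j *
            (q ^ ((m : ℤ) * (μ ^ 2 - 1)) * (q ^ (μ - 1) * ξ ^ (-i))) := by
          rw [← sum_range_eq_sum_zmod p fun x => ψ ((m' ^ 2 * (M ^ 2 - 1) + m' * (M - 1) - I)
            + m' ^ 2 * x ^ 2 + (m' * (M - 1) - I) * x)]
          refine Finset.sum_congr rfl fun j _ => ?_
          rw [← hRterm j]
          ring
      _ = q ^ ((m : ℤ) * (μ ^ 2 - 1)) * (q ^ (μ - 1) * ξ ^ (-i)) *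
            ∑ j ∈ range p, q ^ (m * j ^ 2) * (q ^ (μ - 1) * ξ ^ (-i)) ^ j := by
          rw [Finset.mul_sum]
          exact Finset.sum_congr rfl fun j _ => by ring
end
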